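/- arXiv:2011.06743 — 2 statements merged into one kernel-verified Lean document; each statement's English description precedes it below -/
import Mathlib

section
/- Let u = (u₁,u₂) be a global C^∞ solution of the system with compactly supported C^∞ data, and suppose ‖u₁(0)‖_E ≠ ‖u₂(0)‖_E. Then it is not the case that both ‖u₁(t)‖_E → 0 and ‖u₂(t)‖_E → 0 as t → +∞; i.e., at least one of the two energies does not decay to zero. -/
open Real MeasureTheory Filter Topology

noncomputable section

/-- Partial derivative in `t`. -/
def pt (u : ℝ → ℝ → ℝ → ℝ) : ℝ → ℝ → ℝ → ℝ :=
  fun t x1 x2 => deriv (fun s => u s x1 x2) t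

/-- Partial derivative in `x₁`. -/
def p1 (u : ℝ → ℝ → ℝ → ℝ) : ℝ → ℝ → ℝ → ℝ :=
  fun t x1 x2 => deriv (fun y => u t y x2) x1

/-- Partial derivative in `x₂`. -/
def p2 (u : ℝ → ℝ → ℝ → ℝ) : ℝ → ℝ → ℝ → ℝ :=
  fun t x1 x2 => deriv (fun y => u t x1 y) x2

/-- The d'Alembertian `□ = ∂ₜ² − ∂₁² − ∂₂²`. -/
def dAlembert (u : ℝ → ℝ → ℝ → ℝ) : ℝ → ℝ → ℝ → ℝ :=
  fun t x1 x2 => pt (pt u) t x1 x2 - p1 (p1 u) t x1 x2 - p2 (p2 u) t x1 x2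

/-- `u : ℝ×ℝ² → ℝ` (curried) is C^∞. -/
def Smooth3 (u : ℝ → ℝ → ℝ → ℝ) : Prop :=
  ContDiff ℝ (⊤ : ℕ∞) (fun p : ℝ × ℝ × ℝ => u p.1 p.2.1 p.2.2)

/-- Compactly supported C^∞ function on ℝ². -/
def SmoothCompact2 (f : ℝ → ℝ → ℝ) : Prop :=
  ContDiff ℝ (⊤ : ℕ∞) (fun p : ℝ × ℝ => f p.1 p.2) ∧
    HasCompactSupport (fun p : ℝ × ℝ => f p.1 p.2)

/-- Global C^∞ solution of the Cauchy problem
`□u₁ = −(∂ₜu₂)²∂ₜu₁`, `□u₂ = −(∂ₜu₁)²∂ₜu₂` with data `(εf_j, εg_j)`. -/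
structure IsSolution (ε : ℝ) (f1 f2 g1 g2 : ℝ → ℝ → ℝ)
    (u1 u2 : ℝ → ℝ → ℝ → ℝ) : Prop where
  smooth1 : Smooth3 u1
  smooth2 : Smooth3 u2
  pde1 : ∀ t x1 x2 : ℝ, 0 < t →
    dAlembert u1 t x1 x2 = -(pt u2 t x1 x2) ^ 2 * pt u1 t x1 x2
  pde2 : ∀ t x1 x2 : ℝ, 0 < t →
    dAlembert u2 t x1 x2 = -(pt u1 t x1 x2) ^ 2 * pt u2 t x1 x2
  init1 : ∀ x1 x2 : ℝ, u1 0 x1 x2 = ε * f1 x1 x2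
  init2 : ∀ x1 x2 : ℝ, u2 0 x1 x2 = ε * f2 x1 x2
  initd1 : ∀ x1 x2 : ℝ, pt u1 0 x1 x2 = ε * g1 x1 x2
  initd2 : ∀ x1 x2 : ℝ, pt u2 0 x1 x2 = ε * g2 x1 x2

/-- `‖u(t)‖_E²  = ½∫ ((∂ₜu)² + (∂₁u)² + (∂₂u)²) dx`. -/
def energySq (u : ℝ → ℝ → ℝ → ℝ) (t : ℝ) : ℝ :=
  (1 / 2) * ∫ x : ℝ × ℝ,
    ((pt u t x.1 x.2) ^ 2 + (p1 u t x.1 x.2) ^ 2 + (p2 u t x.1 x.2) ^ 2)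

/-- The energy norm `‖u(t)‖_E`. -/
def energyNorm (u : ℝ → ℝ → ℝ → ℝ) (t : ℝ) : ℝ :=
  Real.sqrt (energySq u t)

/-- `|x|` in coordinates. -/
def radius (x1 x2 : ℝ) : ℝ := Real.sqrt (x1 ^ 2 + x2 ^ 2)

/-- The Japanese bracket `⟨z⟩ = (1+z²)^{1/2}`. -/
def jb (z : ℝ) : ℝ := Real.sqrt (1 + z ^ 2)

/-- `U(t,x) = D(|x|^{1/2}u(t,x))` where `D = ½(∂_r − ∂ₜ)`. -/
def Uop (u : ℝ → ℝ → ℝ → ℝ) : ℝ → ℝ → ℝ → ℝ :=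
  fun t x1 x2 =>
    (1 / 2) * ((x1 / radius x1 x2) *
        p1 (fun s y1 y2 => radius y1 y2 ^ ((1 : ℝ) / 2) * u s y1 y2) t x1 x2
      + (x2 / radius x1 x2) *
        p2 (fun s y1 y2 => radius y1 y2 ^ ((1 : ℝ) / 2) * u s y1 y2) t x1 x2
      - pt (fun s y1 y2 => radius y1 y2 ^ ((1 : ℝ) / 2) * u s y1 y2) t x1 x2)

/-- `V(t;σ,ω) = U(t,(t+σ)ω)`. -/
def Vop (u : ℝ → ℝ → ℝ → ℝ) (t σ ω1 ω2 : ℝ) : ℝ :=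
  Uop u t ((t + σ) * ω1) ((t + σ) * ω2)

/-- The rotation vector field `Ω = x₁∂₂ − x₂∂₁`. -/
def rot (u : ℝ → ℝ → ℝ → ℝ) : ℝ → ℝ → ℝ → ℝ :=
  fun t x1 x2 => x1 * p2 u t x1 x2 - x2 * p1 u t x1 x2

/-- `H` for component `a` (the other component being `b`):
`H_a = ½(|x|^{1/2}(∂ₜu_b)²(∂ₜu_a) + t⁻¹U_b²U_a) − (8|x|^{3/2})⁻¹(4Ω²+1)u_a`. -/
def Hfun (ua ub : ℝ → ℝ → ℝ → ℝ) (t x1 x2 : ℝ) : ℝ :=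
  (1 / 2) * (radius x1 x2 ^ ((1 : ℝ) / 2) * (pt ub t x1 x2) ^ 2 * pt ua t x1 x2
      + (1 / t) * (Uop ub t x1 x2) ^ 2 * Uop ua t x1 x2)
    - (1 / (8 * radius x1 x2 ^ ((3 : ℝ) / 2))) *
        (4 * rot (rot ua) t x1 x2 + ua t x1 x2)

/-- `K_a(t;σ,ω) = H_a(t,(t+σ)ω)`. -/
def Kfun (ua ub : ℝ → ℝ → ℝ → ℝ) (t σ ω1 ω2 : ℝ) : ℝ :=
  Hfun ua ub t ((t + σ) * ω1) ((t + σ) * ω2)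

/-- `ρ = V₁K₁ − V₂K₂`. -/
def rhoFun (u1 u2 : ℝ → ℝ → ℝ → ℝ) (t σ ω1 ω2 : ℝ) : ℝ :=
  Vop u1 t σ ω1 ω2 * Kfun u1 u2 t σ ω1 ω2 -
    Vop u2 t σ ω1 ω2 * Kfun u2 u1 t σ ω1 ω2

/-- The Radon transform: line integral of `φ` over `{y : y·ω = s}`. -/
def Rline (φ : ℝ → ℝ → ℝ) (s ω1 ω2 : ℝ) : ℝ :=
  ∫ τ : ℝ, φ (s * ω1 - τ * ω2) (s * ω2 + τ * ω1)

/-- `R₂[φ](σ,ω) = (2√2π)⁻¹ ∫_σ^∞ R[φ](s,ω)(s−σ)^{−1/2} ds`. -/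
def R2 (φ : ℝ → ℝ → ℝ) (σ ω1 ω2 : ℝ) : ℝ :=
  (1 / (2 * Real.sqrt 2 * Real.pi)) *
    ∫ s in Set.Ioi σ, Rline φ s ω1 ω2 / Real.sqrt (s - σ)

/-- The Friedlander radiation field `F₀[φ,ψ] = −∂_σR₂[φ] + R₂[ψ]`. -/
def F0 (φ ψ : ℝ → ℝ → ℝ) (σ ω1 ω2 : ℝ) : ℝ :=
  -deriv (fun σ' => R2 φ σ' ω1 ω2) σ + R2 ψ σ ω1 ω2

/-- `∂_σF₀[φ,ψ]`. -/
def dF0 (φ ψ : ℝ → ℝ → ℝ) (σ ω1 ω2 : ℝ) : ℝ :=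
  deriv (fun σ' => F0 φ ψ σ' ω1 ω2) σ

/-- The vector fields `Γ = (S, L₁, L₂, Ω, ∂ₜ, ∂₁, ∂₂)`. -/
def Gam (i : Fin 7) (u : ℝ → ℝ → ℝ → ℝ) : ℝ → ℝ → ℝ → ℝ :=
  match i with
  | 0 => fun t x1 x2 => t * pt u t x1 x2 + x1 * p1 u t x1 x2 + x2 * p2 u t x1 x2
  | 1 => fun t x1 x2 => t * p1 u t x1 x2 + x1 * pt u t x1 x2
  | 2 => fun t x1 x2 => t * p2 u t x1 x2 + x2 * pt u t x1 x2
  | 3 => rot u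
  | 4 => pt u
  | 5 => p1 u
  | 6 => p2 u

/-- `Γ^α = Γ₀^{α₀}⋯Γ₆^{α₆}`. -/
def GamMulti (α : Fin 7 → ℕ) (u : ℝ → ℝ → ℝ → ℝ) : ℝ → ℝ → ℝ → ℝ :=
  (Gam 0)^[α 0] ((Gam 1)^[α 1] ((Gam 2)^[α 2] ((Gam 3)^[α 3]
    ((Gam 4)^[α 4] ((Gam 5)^[α 5] ((Gam 6)^[α 6] u))))))

/-- Pointwise norm `|φ(t,x)|_s = Σ_{|α|≤s}|Γ^αφ(t,x)|`, for a (finite) family of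
components, `|Γ^αφ|` being the Euclidean norm of the vector of components. -/
def ptwiseNorm (s : ℕ) (us : List (ℝ → ℝ → ℝ → ℝ)) (t x1 x2 : ℝ) : ℝ :=
  ∑ α : Fin 7 → Fin (s + 1),
    if (∑ i, (α i : ℕ)) ≤ s then
      Real.sqrt ((us.map fun u => (GamMulti (fun i => (α i : ℕ)) u t x1 x2) ^ 2).sum)
    else 0

/-- `‖φ(t)‖_s = Σ_{|α|≤s}‖Γ^αφ(t,·)‖_{L²(ℝ²)}`. -/
def sobNorm (s : ℕ) (us : List (ℝ → ℝ → ℝ → ℝ)) (t : ℝ) : ℝ :=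
  ∑ α : Fin 7 → Fin (s + 1),
    if (∑ i, (α i : ℕ)) ≤ s then
      Real.sqrt (∫ x : ℝ × ℝ,
        (us.map fun u => (GamMulti (fun i => (α i : ℕ)) u t x.1 x.2) ^ 2).sum)
    else 0

/-- The components of `∂u = (∂ₜu₁,∂₁u₁,∂₂u₁,∂ₜu₂,∂₁u₂,∂₂u₂)`. -/
def dList (u1 u2 : ℝ → ℝ → ℝ → ℝ) : List (ℝ → ℝ → ℝ → ℝ) :=
  [pt u1, p1 u1, p2 u1, pt u2, p1 u2, p2 u2]

/-- Smooth solution of the free wave equation with data `(φ0,φ1)`. -/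
def IsFreeSolution (φ0 φ1 : ℝ → ℝ → ℝ) (φ : ℝ → ℝ → ℝ → ℝ) : Prop :=
  Smooth3 φ ∧ (∀ t x1 x2 : ℝ, 0 < t → dAlembert φ t x1 x2 = 0) ∧
    (∀ x1 x2 : ℝ, φ 0 x1 x2 = φ0 x1 x2) ∧
    (∀ x1 x2 : ℝ, pt φ 0 x1 x2 = φ1 x1 x2)

/-- Mixed space-time partial `∂^α = ∂ₜ^{α₀}∂₁^{α₁}∂₂^{α₂}`. -/
def dmix (α : Fin 3 → ℕ) (u : ℝ → ℝ → ℝ → ℝ) : ℝ → ℝ → ℝ → ℝ :=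
  pt^[α 0] (p1^[α 1] (p2^[α 2] u))

/-!
Write `eᵢ = (∂ₜuᵢ)² + |∇uᵢ|²`. For any smooth `u`,
`∂ₜe = ∂₁(2 ∂ₜu ∂₁u) + ∂₂(2 ∂ₜu ∂₂u) + 2 ∂ₜu □u`, and for the system both sources
`2 ∂ₜuᵢ □uᵢ` equal `-2 (∂ₜu₁ ∂ₜu₂)²`: each component loses energy at the same rate.
Integrating the identity against a smooth cutoff of a backward light cone shows that the local
energy in the cone cannot increase, so each `eᵢ` stays supported in `|x| ≤ R + t`
(finite speed of propagation). The energy identities may then be integrated over the plane,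
and `E₁(t) - E₂(t)` is constant. If both energies tended to `0`, that constant would be `0`,
contradicting `E₁(0) ≠ E₂(0)`.
-/

open Set

variable {u w : ℝ → ℝ → ℝ → ℝ}

def uncurry3 (u : ℝ → ℝ → ℝ → ℝ) : ℝ × ℝ × ℝ → ℝ := fun q => u q.1 q.2.1 q.2.2

theorem fderiv_fderiv_apply_comm {E F : Type*} [NormedAddCommGroup E] [NormedSpace ℝ E]
    [NormedAddCommGroup F] [NormedSpace ℝ F] {U : E → F} (hU : ContDiff ℝ 2 U) (p v w : E) :
    fderiv ℝ (fun q => fderiv ℝ U q w) p v = fderiv ℝ (fun q => fderiv ℝ U q v) p w := by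
  have h2 : DifferentiableAt ℝ (fderiv ℝ U) p :=
    (hU.fderiv_right (m := 1) le_rfl).differentiable one_ne_zero p
  have hdir : ∀ z, fderiv ℝ (fun q => fderiv ℝ U q z) p =
      (ContinuousLinearMap.apply ℝ F z).comp (fderiv ℝ (fderiv ℝ U) p) := fun z =>
    ((ContinuousLinearMap.apply ℝ F z).hasFDerivAt.comp p h2.hasFDerivAt).fderiv
  simp only [hdir, ContinuousLinearMap.comp_apply, ContinuousLinearMap.apply_apply]
  exact hU.contDiffAt.isSymmSndFDerivAt (by simp) v w

theorem contDiff_fderiv_apply {U : ℝ × ℝ × ℝ → ℝ} (hU : ContDiff ℝ (⊤ : ℕ∞) U)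
    (v : ℝ × ℝ × ℝ) : ContDiff ℝ (⊤ : ℕ∞) fun q => fderiv ℝ U q v :=
  (hU.fderiv_right (m := (⊤ : ℕ∞)) (by exact_mod_cast le_top)).clm_apply contDiff_const

namespace Smooth3

theorem differentiable (hu : Smooth3 u) : Differentiable ℝ (uncurry3 u) :=
  ContDiff.differentiable hu (by simp)

theorem mul (hu : Smooth3 u) (hw : Smooth3 w) : Smooth3 fun t x1 x2 => u t x1 x2 * w t x1 x2 :=
  ContDiff.mul hu hw

theorem continuous (hu : Smooth3 u) : Continuous (uncurry3 u) :=
  hu.differentiable.continuous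

theorem continuous_slice (hu : Smooth3 u) (t : ℝ) : Continuous fun x : ℝ × ℝ => u t x.1 x.2 :=
  hu.continuous.comp (by fun_prop : Continuous fun x : ℝ × ℝ => (t, x.1, x.2))

theorem hasDerivAt_pt (hu : Smooth3 u) (t x1 x2 : ℝ) :
    HasDerivAt (fun s => u s x1 x2) (pt u t x1 x2) t := by
  have hU := hu.differentiable
  exact (show DifferentiableAt ℝ (fun s => uncurry3 u (s, x1, x2)) t by fun_prop).hasDerivAt

theorem hasDerivAt_p1 (hu : Smooth3 u) (t x1 x2 : ℝ) :
    HasDerivAt (fun y => u t y x2) (p1 u t x1 x2) x1 := by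
  have hU := hu.differentiable
  exact (show DifferentiableAt ℝ (fun y => uncurry3 u (t, y, x2)) x1 by fun_prop).hasDerivAt

theorem hasDerivAt_p2 (hu : Smooth3 u) (t x1 x2 : ℝ) :
    HasDerivAt (fun y => u t x1 y) (p2 u t x1 x2) x2 := by
  have hU := hu.differentiable
  exact (show DifferentiableAt ℝ (fun y => uncurry3 u (t, x1, y)) x2 by fun_prop).hasDerivAt

theorem uncurry3_pt (hu : Smooth3 u) :
    uncurry3 (pt u) = fun q => fderiv ℝ (uncurry3 u) q (1, 0, 0) := by
  funext q
  have hcurve : HasDerivAt (fun s : ℝ => ((s, q.2.1, q.2.2) : ℝ × ℝ × ℝ)) (1, 0, 0) q.1 :=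
    (hasDerivAt_id _).prodMk ((hasDerivAt_const _ _).prodMk (hasDerivAt_const _ _))
  exact ((hu.differentiable q).hasFDerivAt.comp_hasDerivAt q.1 hcurve).deriv

theorem uncurry3_p1 (hu : Smooth3 u) :
    uncurry3 (p1 u) = fun q => fderiv ℝ (uncurry3 u) q (0, 1, 0) := by
  funext q
  have hcurve : HasDerivAt (fun y : ℝ => ((q.1, y, q.2.2) : ℝ × ℝ × ℝ)) (0, 1, 0) q.2.1 :=
    (hasDerivAt_const _ _).prodMk ((hasDerivAt_id _).prodMk (hasDerivAt_const _ _))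
  exact ((hu.differentiable q).hasFDerivAt.comp_hasDerivAt q.2.1 hcurve).deriv

theorem uncurry3_p2 (hu : Smooth3 u) :
    uncurry3 (p2 u) = fun q => fderiv ℝ (uncurry3 u) q (0, 0, 1) := by
  funext q
  have hcurve : HasDerivAt (fun y : ℝ => ((q.1, q.2.1, y) : ℝ × ℝ × ℝ)) (0, 0, 1) q.2.2 :=
    (hasDerivAt_const _ _).prodMk ((hasDerivAt_const _ _).prodMk (hasDerivAt_id _))
  exact ((hu.differentiable q).hasFDerivAt.comp_hasDerivAt q.2.2 hcurve).deriv

theorem smooth3_pt (hu : Smooth3 u) : Smooth3 (pt u) := by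
  change ContDiff ℝ _ (uncurry3 (pt u))
  rw [hu.uncurry3_pt]
  exact contDiff_fderiv_apply hu _

theorem smooth3_p1 (hu : Smooth3 u) : Smooth3 (p1 u) := by
  change ContDiff ℝ _ (uncurry3 (p1 u))
  rw [hu.uncurry3_p1]
  exact contDiff_fderiv_apply hu _

theorem smooth3_p2 (hu : Smooth3 u) : Smooth3 (p2 u) := by
  change ContDiff ℝ _ (uncurry3 (p2 u))
  rw [hu.uncurry3_p2]
  exact contDiff_fderiv_apply hu _

theorem pt_p1_comm (hu : Smooth3 u) : pt (p1 u) = p1 (pt u) := by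
  funext t x1 x2
  calc pt (p1 u) t x1 x2 = uncurry3 (pt (p1 u)) (t, x1, x2) := rfl
    _ = fderiv ℝ (fun q => fderiv ℝ (uncurry3 u) q (0, 1, 0)) (t, x1, x2) (1, 0, 0) := by
      rw [hu.smooth3_p1.uncurry3_pt, hu.uncurry3_p1]
    _ = fderiv ℝ (fun q => fderiv ℝ (uncurry3 u) q (1, 0, 0)) (t, x1, x2) (0, 1, 0) :=
      fderiv_fderiv_apply_comm (hu.of_le (WithTop.coe_le_coe.2 le_top)) _ _ _
    _ = p1 (pt u) t x1 x2 := by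
      rw [← hu.uncurry3_pt]; exact (congrFun hu.smooth3_pt.uncurry3_p1 _).symm

theorem pt_p2_comm (hu : Smooth3 u) : pt (p2 u) = p2 (pt u) := by
  funext t x1 x2
  calc pt (p2 u) t x1 x2 = uncurry3 (pt (p2 u)) (t, x1, x2) := rfl
    _ = fderiv ℝ (fun q => fderiv ℝ (uncurry3 u) q (0, 0, 1)) (t, x1, x2) (1, 0, 0) := by
      rw [hu.smooth3_p2.uncurry3_pt, hu.uncurry3_p2]
    _ = fderiv ℝ (fun q => fderiv ℝ (uncurry3 u) q (1, 0, 0)) (t, x1, x2) (0, 0, 1) :=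
      fderiv_fderiv_apply_comm (hu.of_le (WithTop.coe_le_coe.2 le_top)) _ _ _
    _ = p2 (pt u) t x1 x2 := by
      rw [← hu.uncurry3_pt]; exact (congrFun hu.smooth3_pt.uncurry3_p2 _).symm

end Smooth3

def energyDensity (u : ℝ → ℝ → ℝ → ℝ) : ℝ → ℝ → ℝ → ℝ :=
  fun t x1 x2 => pt u t x1 x2 ^ 2 + p1 u t x1 x2 ^ 2 + p2 u t x1 x2 ^ 2

def energyFlux1 (u : ℝ → ℝ → ℝ → ℝ) : ℝ → ℝ → ℝ → ℝ :=
  fun t x1 x2 => 2 * pt u t x1 x2 * p1 u t x1 x2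

def energyFlux2 (u : ℝ → ℝ → ℝ → ℝ) : ℝ → ℝ → ℝ → ℝ :=
  fun t x1 x2 => 2 * pt u t x1 x2 * p2 u t x1 x2

theorem energySq_eq_integral (u : ℝ → ℝ → ℝ → ℝ) (t : ℝ) :
    energySq u t = 1 / 2 * ∫ x : ℝ × ℝ, energyDensity u t x.1 x.2 :=
  rfl

theorem energyDensity_nonneg (u : ℝ → ℝ → ℝ → ℝ) (t x1 x2 : ℝ) :
    0 ≤ energyDensity u t x1 x2 := by
  unfold energyDensity; positivity

theorem energyDensity_eq_zero_iff {t x1 x2 : ℝ} :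
    energyDensity u t x1 x2 = 0 ↔ pt u t x1 x2 = 0 ∧ p1 u t x1 x2 = 0 ∧ p2 u t x1 x2 = 0 := by
  unfold energyDensity
  constructor
  · intro h
    refine ⟨?_, ?_, ?_⟩ <;> nlinarith [sq_nonneg (pt u t x1 x2), sq_nonneg (p1 u t x1 x2),
      sq_nonneg (p2 u t x1 x2)]
  · rintro ⟨h0, h1, h2⟩
    simp [h0, h1, h2]

theorem energyFlux_le_energyDensity {n1 n2 : ℝ} (hn : n1 ^ 2 + n2 ^ 2 ≤ 1) (t x1 x2 : ℝ) :
    n1 * energyFlux1 u t x1 x2 + n2 * energyFlux2 u t x1 x2 ≤ energyDensity u t x1 x2 := by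
  unfold energyFlux1 energyFlux2 energyDensity
  nlinarith [sq_nonneg (n1 * pt u t x1 x2 - p1 u t x1 x2),
    sq_nonneg (n2 * pt u t x1 x2 - p2 u t x1 x2), sq_nonneg (pt u t x1 x2)]

namespace Smooth3

theorem smooth3_energyDensity (hu : Smooth3 u) : Smooth3 (energyDensity u) :=
  ((hu.smooth3_pt.pow 2).add (hu.smooth3_p1.pow 2)).add (hu.smooth3_p2.pow 2)

theorem smooth3_energyFlux1 (hu : Smooth3 u) : Smooth3 (energyFlux1 u) :=
  (contDiff_const.mul hu.smooth3_pt).mul hu.smooth3_p1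

theorem smooth3_energyFlux2 (hu : Smooth3 u) : Smooth3 (energyFlux2 u) :=
  (contDiff_const.mul hu.smooth3_pt).mul hu.smooth3_p2

theorem pt_energyDensity (hu : Smooth3 u) (t x1 x2 : ℝ) :
    pt (energyDensity u) t x1 x2 = p1 (energyFlux1 u) t x1 x2 + p2 (energyFlux2 u) t x1 x2
      + 2 * pt u t x1 x2 * dAlembert u t x1 x2 := by
  have hE := (((hu.smooth3_pt.hasDerivAt_pt t x1 x2).fun_pow 2).fun_add
    ((hu.smooth3_p1.hasDerivAt_pt t x1 x2).fun_pow 2)).fun_add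
    ((hu.smooth3_p2.hasDerivAt_pt t x1 x2).fun_pow 2)
  have hF1 := ((hu.smooth3_pt.hasDerivAt_p1 t x1 x2).const_mul 2).fun_mul
    (hu.smooth3_p1.hasDerivAt_p1 t x1 x2)
  have hF2 := ((hu.smooth3_pt.hasDerivAt_p2 t x1 x2).const_mul 2).fun_mul
    (hu.smooth3_p2.hasDerivAt_p2 t x1 x2)
  rw [show pt (energyDensity u) t x1 x2 = _ from hE.deriv,
    show p1 (energyFlux1 u) t x1 x2 = _ from hF1.deriv,
    show p2 (energyFlux2 u) t x1 x2 = _ from hF2.deriv, dAlembert, hu.pt_p1_comm, hu.pt_p2_comm]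
  ring

end Smooth3

@[simp] theorem pt_const (a t x1 x2 : ℝ) : pt (fun _ _ _ => a) t x1 x2 = 0 := deriv_const _ _

@[simp] theorem p1_const (a t x1 x2 : ℝ) : p1 (fun _ _ _ => a) t x1 x2 = 0 := deriv_const _ _

@[simp] theorem p2_const (a t x1 x2 : ℝ) : p2 (fun _ _ _ => a) t x1 x2 = 0 := deriv_const _ _

theorem pt_eq_zero_of_eventually {t x1 x2 : ℝ} (h : ∀ᶠ s in 𝓝 t, u s x1 x2 = 0) :
    pt u t x1 x2 = 0 := by
  have hslice : (fun s => u s x1 x2) =ᶠ[𝓝 t] fun _ => 0 := h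
  exact hslice.deriv_eq.trans (deriv_const _ _)

theorem p1_eq_zero_of_eventually {t : ℝ} {x : ℝ × ℝ} (h : ∀ᶠ y in 𝓝 x, u t y.1 y.2 = 0) :
    p1 u t x.1 x.2 = 0 := by
  have hslice : (fun y => u t y x.2) =ᶠ[𝓝 x.1] fun _ => 0 :=
    ((by fun_prop : Continuous fun y : ℝ => (y, x.2)).tendsto x.1).eventually h
  exact hslice.deriv_eq.trans (deriv_const _ _)

theorem p2_eq_zero_of_eventually {t : ℝ} {x : ℝ × ℝ} (h : ∀ᶠ y in 𝓝 x, u t y.1 y.2 = 0) :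
    p2 u t x.1 x.2 = 0 := by
  have hslice : (fun y => u t x.1 y) =ᶠ[𝓝 x.2] fun _ => 0 :=
    ((by fun_prop : Continuous fun y : ℝ => (x.1, y)).tendsto x.2).eventually h
  exact hslice.deriv_eq.trans (deriv_const _ _)

theorem p1_eq_zero_of_forall_notMem {K : Set (ℝ × ℝ)} (hK : IsClosed K) {t : ℝ}
    (hvan : ∀ x ∉ K, u t x.1 x.2 = 0) : ∀ x ∉ K, p1 u t x.1 x.2 = 0 := fun _ hx =>
  p1_eq_zero_of_eventually (eventually_of_mem (hK.isOpen_compl.mem_nhds hx) hvan)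

theorem p2_eq_zero_of_forall_notMem {K : Set (ℝ × ℝ)} (hK : IsClosed K) {t : ℝ}
    (hvan : ∀ x ∉ K, u t x.1 x.2 = 0) : ∀ x ∉ K, p2 u t x.1 x.2 = 0 := fun _ hx =>
  p2_eq_zero_of_eventually (eventually_of_mem (hK.isOpen_compl.mem_nhds hx) hvan)

theorem integrable_of_forall_notMem_eq_zero {G : ℝ × ℝ → ℝ} (hG : Continuous G)
    {K : Set (ℝ × ℝ)} (hK : IsCompact K) (hvan : ∀ x ∉ K, G x = 0) : Integrable G :=
  hG.integrable_of_hasCompactSupport (HasCompactSupport.intro hK hvan)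

theorem integrable_fst_slice {G : ℝ × ℝ → ℝ} (hG : Continuous G) {K : Set (ℝ × ℝ)}
    (hK : IsCompact K) (hvan : ∀ x ∉ K, G x = 0) (x2 : ℝ) : Integrable fun y => G (y, x2) :=
  (hG.comp (by fun_prop : Continuous fun y : ℝ => (y, x2))).integrable_of_hasCompactSupport
    (HasCompactSupport.intro (hK.image continuous_fst) fun _ hy => hvan _ fun h => hy ⟨_, h, rfl⟩)

theorem integrable_snd_slice {G : ℝ × ℝ → ℝ} (hG : Continuous G) {K : Set (ℝ × ℝ)}
    (hK : IsCompact K) (hvan : ∀ x ∉ K, G x = 0) (x1 : ℝ) : Integrable fun y => G (x1, y) :=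
  (hG.comp (by fun_prop : Continuous fun y : ℝ => (x1, y))).integrable_of_hasCompactSupport
    (HasCompactSupport.intro (hK.image continuous_snd) fun _ hy => hvan _ fun h => hy ⟨_, h, rfl⟩)

namespace Smooth3

variable {K : Set (ℝ × ℝ)}

theorem hasDerivAt_integral (hu : Smooth3 u) (hK : IsCompact K) {t₀ : ℝ}
    (hvan : ∀ᶠ t in 𝓝 t₀, ∀ x ∉ K, u t x.1 x.2 = 0) :
    Integrable (fun x : ℝ × ℝ => pt u t₀ x.1 x.2) ∧
      HasDerivAt (fun t => ∫ x : ℝ × ℝ, u t x.1 x.2) (∫ x : ℝ × ℝ, pt u t₀ x.1 x.2) t₀ := by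
  obtain ⟨r, hr, hball⟩ := Metric.eventually_nhds_iff_ball.1 hvan
  have hpt : ∀ t ∈ Metric.ball t₀ r, ∀ x ∉ K, pt u t x.1 x.2 = 0 := fun t ht x hx =>
    pt_eq_zero_of_eventually
      (eventually_of_mem (Metric.isOpen_ball.mem_nhds ht) fun s hs => hball s hs x hx)
  obtain ⟨C, hC⟩ := ((isCompact_closedBall t₀ (r / 2)).prod hK).exists_bound_of_continuousOn
    hu.smooth3_pt.continuous.continuousOn
  have hsub : Metric.ball t₀ (r / 2) ⊆ Metric.ball t₀ r := Metric.ball_subset_ball (by linarith)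
  refine hasDerivAt_integral_of_dominated_loc_of_deriv_le (bound := K.indicator fun _ => C)
    (Metric.ball_mem_nhds t₀ (half_pos hr))
    (Eventually.of_forall fun t => (hu.continuous_slice t).aestronglyMeasurable)
    (integrable_of_forall_notMem_eq_zero (hu.continuous_slice t₀) hK
      (hball t₀ (Metric.mem_ball_self hr)))
    (hu.smooth3_pt.continuous_slice t₀).aestronglyMeasurable
    (ae_of_all _ fun x t ht => ?_)
    ((integrable_indicator_iff hK.measurableSet).2 (integrableOn_const hK.measure_lt_top.ne))
    (ae_of_all _ fun x t _ => hu.hasDerivAt_pt t x.1 x.2)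
  by_cases hx : x ∈ K
  · simpa [hx, uncurry3] using hC (t, x) ⟨Metric.ball_subset_closedBall ht, hx⟩
  · simp [hx, hpt t (hsub ht) x hx]

theorem integral_p1_eq_zero (hu : Smooth3 u) (hK : IsCompact K) {t : ℝ}
    (hvan : ∀ x ∉ K, u t x.1 x.2 = 0) : ∫ x : ℝ × ℝ, p1 u t x.1 x.2 = 0 := by
  have hp1 := p1_eq_zero_of_forall_notMem hK.isClosed hvan
  have hint := integrable_of_forall_notMem_eq_zero (hu.smooth3_p1.continuous_slice t) hK hp1
  rw [Measure.volume_eq_prod] at hint ⊢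
  rw [integral_prod_symm _ hint]
  refine integral_eq_zero_of_ae (ae_of_all _ fun x2 => ?_)
  exact integral_eq_zero_of_hasDerivAt_of_integrable (fun x1 => hu.hasDerivAt_p1 t x1 x2)
    (integrable_fst_slice (hu.smooth3_p1.continuous_slice t) hK hp1 x2)
    (integrable_fst_slice (hu.continuous_slice t) hK hvan x2)

theorem integral_p2_eq_zero (hu : Smooth3 u) (hK : IsCompact K) {t : ℝ}
    (hvan : ∀ x ∉ K, u t x.1 x.2 = 0) : ∫ x : ℝ × ℝ, p2 u t x.1 x.2 = 0 := by
  have hp2 := p2_eq_zero_of_forall_notMem hK.isClosed hvan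
  have hint := integrable_of_forall_notMem_eq_zero (hu.smooth3_p2.continuous_slice t) hK hp2
  rw [Measure.volume_eq_prod] at hint ⊢
  rw [integral_prod _ hint]
  refine integral_eq_zero_of_ae (ae_of_all _ fun x1 => ?_)
  exact integral_eq_zero_of_hasDerivAt_of_integrable (fun x2 => hu.hasDerivAt_p2 t x1 x2)
    (integrable_snd_slice (hu.smooth3_p2.continuous_slice t) hK hp2 x1)
    (integrable_snd_slice (hu.continuous_slice t) hK hvan x1)

end Smooth3

theorem hasDerivAt_integral_weight_mul {D F1 F2 : ℝ → ℝ → ℝ → ℝ} {S : ℝ → ℝ → ℝ}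
    (hw : Smooth3 w) (hD : Smooth3 D) (hF1 : Smooth3 F1) (hF2 : Smooth3 F2)
    {K : Set (ℝ × ℝ)} (hK : IsCompact K) {t₀ : ℝ}
    (hwD : ∀ᶠ t in 𝓝 t₀, ∀ x ∉ K, w t x.1 x.2 * D t x.1 x.2 = 0)
    (hwF1 : ∀ x ∉ K, w t₀ x.1 x.2 * F1 t₀ x.1 x.2 = 0)
    (hwF2 : ∀ x ∉ K, w t₀ x.1 x.2 * F2 t₀ x.1 x.2 = 0)
    (hcons : ∀ x1 x2, pt D t₀ x1 x2 = p1 F1 t₀ x1 x2 + p2 F2 t₀ x1 x2 + S x1 x2) :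
    HasDerivAt (fun t => ∫ x : ℝ × ℝ, w t x.1 x.2 * D t x.1 x.2)
      (∫ x : ℝ × ℝ, (pt w t₀ x.1 x.2 * D t₀ x.1 x.2 - p1 w t₀ x.1 x.2 * F1 t₀ x.1 x.2
        - p2 w t₀ x.1 x.2 * F2 t₀ x.1 x.2 + w t₀ x.1 x.2 * S x.1 x.2)) t₀ := by
  have hwD' := hw.mul hD
  have hwF1' := hw.mul hF1
  have hwF2' := hw.mul hF2
  obtain ⟨hint, hder⟩ := hwD'.hasDerivAt_integral hK hwD
  have hint1 := integrable_of_forall_notMem_eq_zero (hwF1'.smooth3_p1.continuous_slice t₀) hK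
    (p1_eq_zero_of_forall_notMem hK.isClosed hwF1)
  have hint2 := integrable_of_forall_notMem_eq_zero (hwF2'.smooth3_p2.continuous_slice t₀) hK
    (p2_eq_zero_of_forall_notMem hK.isClosed hwF2)
  -- `∂ₜ(wD)` is the claimed integrand plus `∂₁(wF₁) + ∂₂(wF₂)`, whose integral is `0`
  convert hder using 1
  calc _ = ∫ x : ℝ × ℝ, (pt (fun t x1 x2 => w t x1 x2 * D t x1 x2) t₀ x.1 x.2
          - p1 (fun t x1 x2 => w t x1 x2 * F1 t x1 x2) t₀ x.1 x.2
          - p2 (fun t x1 x2 => w t x1 x2 * F2 t x1 x2) t₀ x.1 x.2) := by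
        refine integral_congr_ae (ae_of_all _ fun x => ?_)
        dsimp only
        rw [show pt (fun t x1 x2 => w t x1 x2 * D t x1 x2) t₀ x.1 x.2 = _ from
            ((hw.hasDerivAt_pt t₀ x.1 x.2).fun_mul (hD.hasDerivAt_pt t₀ x.1 x.2)).deriv,
          show p1 (fun t x1 x2 => w t x1 x2 * F1 t x1 x2) t₀ x.1 x.2 = _ from
            ((hw.hasDerivAt_p1 t₀ x.1 x.2).fun_mul (hF1.hasDerivAt_p1 t₀ x.1 x.2)).deriv,
          show p2 (fun t x1 x2 => w t x1 x2 * F2 t x1 x2) t₀ x.1 x.2 = _ from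
            ((hw.hasDerivAt_p2 t₀ x.1 x.2).fun_mul (hF2.hasDerivAt_p2 t₀ x.1 x.2)).deriv,
          hcons]
        ring
    _ = _ := by
      rw [integral_sub (hint.sub' hint1) hint2, integral_sub hint hint1,
        hwF1'.integral_p1_eq_zero hK hwF1, hwF2'.integral_p2_eq_zero hK hwF2]
      ring

def smoothDist (δ : ℝ) (c : ℝ × ℝ) (y1 y2 : ℝ) : ℝ :=
  √(δ ^ 2 + (y1 - c.1) ^ 2 + (y2 - c.2) ^ 2)

section smoothDist

variable {δ : ℝ} {c : ℝ × ℝ}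

theorem smoothDist_pos (hδ : 0 < δ) (y1 y2 : ℝ) : 0 < smoothDist δ c y1 y2 :=
  Real.sqrt_pos.2 (by positivity)

theorem smoothDist_self (hδ : 0 ≤ δ) : smoothDist δ c c.1 c.2 = δ := by
  simp [smoothDist, Real.sqrt_sq hδ]

theorem dist_le_smoothDist (y : ℝ × ℝ) : dist y c ≤ smoothDist δ c y.1 y.2 := by
  rw [Prod.dist_eq, Real.dist_eq, Real.dist_eq, ← Real.sqrt_sq_eq_abs, ← Real.sqrt_sq_eq_abs]
  exact max_le (Real.sqrt_le_sqrt (by nlinarith [sq_nonneg δ, sq_nonneg (y.2 - c.2)]))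
    (Real.sqrt_le_sqrt (by nlinarith [sq_nonneg δ, sq_nonneg (y.1 - c.1)]))

theorem hasDerivAt_smoothDist_fst (hδ : 0 < δ) (y1 y2 : ℝ) :
    HasDerivAt (fun y => smoothDist δ c y y2) ((y1 - c.1) / smoothDist δ c y1 y2) y1 := by
  have h := ((((hasDerivAt_id' y1).sub_const c.1).fun_pow 2).const_add (δ ^ 2)).add_const
    ((y2 - c.2) ^ 2) |>.sqrt (by positivity)
  convert h using 1
  · rfl
  · simp only [smoothDist]
    field_simp
    norm_num
    ring

theorem hasDerivAt_smoothDist_snd (hδ : 0 < δ) (y1 y2 : ℝ) :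
    HasDerivAt (fun y => smoothDist δ c y1 y) ((y2 - c.2) / smoothDist δ c y1 y2) y2 := by
  have h := (((hasDerivAt_id' y2).sub_const c.2).fun_pow 2).const_add
    (δ ^ 2 + (y1 - c.1) ^ 2) |>.sqrt (by positivity)
  convert h using 1
  · funext y; simp [smoothDist, add_assoc]
  · simp only [smoothDist]
    field_simp
    norm_num
    ring

theorem grad_smoothDist_sq_le (hδ : 0 < δ) (y1 y2 : ℝ) :
    ((y1 - c.1) / smoothDist δ c y1 y2) ^ 2 + ((y2 - c.2) / smoothDist δ c y1 y2) ^ 2 ≤ 1 := by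
  have hpos := smoothDist_pos (c := c) hδ y1 y2
  have hsq : smoothDist δ c y1 y2 ^ 2 = δ ^ 2 + (y1 - c.1) ^ 2 + (y2 - c.2) ^ 2 :=
    Real.sq_sqrt (by positivity)
  rw [div_pow, div_pow, ← add_div, div_le_one (by positivity)]
  nlinarith [sq_nonneg δ]

end smoothDist

/-- A smooth cutoff of the backward light cone `{(s, y) | s + ‖y - c‖ < b}`, the distance to `c`
being smoothed at scale `δ`. -/
def coneWeight (b δ : ℝ) (c : ℝ × ℝ) : ℝ → ℝ → ℝ → ℝ :=
  fun s y1 y2 => smoothTransition (b - s - smoothDist δ c y1 y2)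

section coneWeight

variable {b δ : ℝ} {c : ℝ × ℝ}

theorem smooth3_coneWeight (hδ : 0 < δ) : Smooth3 (coneWeight b δ c) := by
  have hρ : ContDiff ℝ (⊤ : ℕ∞) fun q : ℝ × ℝ × ℝ =>
      √(δ ^ 2 + (q.2.1 - c.1) ^ 2 + (q.2.2 - c.2) ^ 2) :=
    ContDiff.sqrt (by fun_prop) fun q => by positivity
  exact smoothTransition.contDiff.comp ((contDiff_const.sub contDiff_fst).sub hρ)

theorem coneWeight_nonneg (s y1 y2 : ℝ) : 0 ≤ coneWeight b δ c s y1 y2 :=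
  smoothTransition.nonneg _

theorem coneWeight_eq_zero {s : ℝ} {y : ℝ × ℝ} (h : b ≤ s + dist y c) :
    coneWeight b δ c s y.1 y.2 = 0 :=
  smoothTransition.zero_of_nonpos (by linarith [dist_le_smoothDist (δ := δ) (c := c) y])

theorem coneWeight_center_pos (hδ : 0 ≤ δ) {s : ℝ} (h : s + δ < b) :
    0 < coneWeight b δ c s c.1 c.2 :=
  smoothTransition.pos_of_pos (by rw [smoothDist_self hδ]; linarith)

/-- Since `|∇ smoothDist| ≤ 1`, the level sets of `s + smoothDist` are spacelike, so energy can
only leave the cone through them. -/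
theorem coneWeight_flux_nonpos (hδ : 0 < δ) (u : ℝ → ℝ → ℝ → ℝ) (s y1 y2 : ℝ) :
    pt (coneWeight b δ c) s y1 y2 * energyDensity u s y1 y2
      - p1 (coneWeight b δ c) s y1 y2 * energyFlux1 u s y1 y2
      - p2 (coneWeight b δ c) s y1 y2 * energyFlux2 u s y1 y2 ≤ 0 := by
  set z := b - s - smoothDist δ c y1 y2
  have hχ : HasDerivAt smoothTransition (deriv smoothTransition z) z :=
    (smoothTransition.contDiff (n := 1).differentiable one_ne_zero z).hasDerivAt
  have ht := hχ.comp s (((hasDerivAt_id' s).const_sub b).sub_const (smoothDist δ c y1 y2))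
  have h1 := hχ.comp y1 ((hasDerivAt_smoothDist_fst hδ y1 y2).const_sub (b - s))
  have h2 := hχ.comp y2 ((hasDerivAt_smoothDist_snd hδ y1 y2).const_sub (b - s))
  rw [show pt (coneWeight b δ c) s y1 y2 = _ from ht.deriv,
    show p1 (coneWeight b δ c) s y1 y2 = _ from h1.deriv,
    show p2 (coneWeight b δ c) s y1 y2 = _ from h2.deriv]
  have hflux :=
    energyFlux_le_energyDensity (u := u) (grad_smoothDist_sq_le (c := c) hδ y1 y2) s y1 y2
  have hm : 0 ≤ deriv smoothTransition z := smoothTransition.monotone.deriv_nonneg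
  nlinarith

theorem antitoneOn_coneWeightedEnergy (hu : Smooth3 u)
    (hdiss : ∀ t x1 x2, 0 < t → pt u t x1 x2 * dAlembert u t x1 x2 ≤ 0) (hδ : 0 < δ) :
    AntitoneOn (fun s => ∫ y : ℝ × ℝ, coneWeight b δ c s y.1 y.2 * energyDensity u s y.1 y.2)
      (Ici 0) := by
  have hvan (s : ℝ) : ∀ s' > s - 1, ∀ y ∉ Metric.closedBall c (b - s + 1),
      coneWeight b δ c s' y.1 y.2 = 0 := fun s' hs' y hy =>
    coneWeight_eq_zero (by rw [Metric.mem_closedBall, not_le] at hy; linarith)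
  have hder (s : ℝ) := hasDerivAt_integral_weight_mul (smooth3_coneWeight hδ)
    hu.smooth3_energyDensity hu.smooth3_energyFlux1 hu.smooth3_energyFlux2
    (isCompact_closedBall c (b - s + 1))
    (eventually_of_mem (Ioi_mem_nhds (by linarith : s - 1 < s)) fun s' hs' y hy => by
      rw [hvan s s' hs' y hy, zero_mul])
    (fun y hy => by rw [hvan s s (by linarith) y hy, zero_mul])
    (fun y hy => by rw [hvan s s (by linarith) y hy, zero_mul]) (hu.pt_energyDensity s)
  refine antitoneOn_of_deriv_nonpos (convex_Ici 0)
    (fun s _ => (hder s).continuousAt.continuousWithinAt)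
    (fun s _ => (hder s).differentiableAt.differentiableWithinAt) fun s hs => ?_
  rw [interior_Ici, mem_Ioi] at hs
  rw [(hder s).deriv]
  refine integral_nonpos fun y => show _ ≤ (0 : ℝ) from ?_
  have hsrc : coneWeight b δ c s y.1 y.2 * (2 * pt u s y.1 y.2 * dAlembert u s y.1 y.2) ≤ 0 :=
    mul_nonpos_of_nonneg_of_nonpos (coneWeight_nonneg _ _ _)
      (by linarith [hdiss s y.1 y.2 hs, mul_assoc 2 (pt u s y.1 y.2) (dAlembert u s y.1 y.2)])
  linarith [coneWeight_flux_nonpos (b := b) (c := c) hδ u s y.1 y.2]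

end coneWeight

/-- `‖x‖` is the sup norm of `ℝ × ℝ`, so this cone is wider than the light cone `|x| ≤ R + t`. -/
def EnergySupportedInCone (u : ℝ → ℝ → ℝ → ℝ) (R : ℝ) : Prop :=
  ∀ t, 0 ≤ t → ∀ x : ℝ × ℝ, R + t < ‖x‖ → energyDensity u t x.1 x.2 = 0

theorem energySupportedInCone_of_dissipative (hu : Smooth3 u)
    (hdiss : ∀ t x1 x2, 0 < t → pt u t x1 x2 * dAlembert u t x1 x2 ≤ 0) {R : ℝ}
    (h0 : ∀ x : ℝ × ℝ, R < ‖x‖ → energyDensity u 0 x.1 x.2 = 0) :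
    EnergySupportedInCone u R := by
  intro t ht c hc
  rcases ht.eq_or_lt with rfl | ht
  · exact h0 c (by linarith)
  set δ := (‖c‖ - R - t) / 2 with hδ_def
  have hδ : 0 < δ := by linarith
  set b := t + 2 * δ
  -- the cone `s + ‖y - c‖ < b` contains `(t, c)` with room `δ` for the smoothing,
  -- and meets `{s = 0}` only where `‖y‖ > R`
  have hI0 : ∫ y : ℝ × ℝ, coneWeight b δ c 0 y.1 y.2 * energyDensity u 0 y.1 y.2 = 0 := by
    refine integral_eq_zero_of_ae (ae_of_all _ fun y => ?_)
    by_cases hy : R < ‖y‖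
    · simp [h0 y hy]
    · have : b ≤ 0 + dist y c := by
        rw [dist_comm, dist_eq_norm]; linarith [norm_sub_norm_le c y]
      simp [coneWeight_eq_zero this]
  by_contra hne
  have hpos : 0 < ∫ y : ℝ × ℝ, coneWeight b δ c t y.1 y.2 * energyDensity u t y.1 y.2 :=
    Continuous.integral_pos_of_hasCompactSupport_nonneg_nonzero (x := c)
      (((smooth3_coneWeight hδ).mul hu.smooth3_energyDensity).continuous_slice t)
      (HasCompactSupport.intro (isCompact_closedBall c (b - t)) fun y hy => by
        rw [Metric.mem_closedBall, not_le] at hy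
        simp [coneWeight_eq_zero (show b ≤ t + dist y c by linarith)])
      (fun y => mul_nonneg (coneWeight_nonneg _ _ _) (energyDensity_nonneg _ _ _ _))
      (mul_ne_zero (coneWeight_center_pos hδ.le (by linarith)).ne' hne)
  have hanti := antitoneOn_coneWeightedEnergy (b := b) (c := c) hu hdiss hδ
    (self_mem_Ici : (0 : ℝ) ∈ Ici 0) (ht.le : t ∈ Ici 0) ht.le
  simp only at hanti
  linarith

theorem energySq_nonneg (u : ℝ → ℝ → ℝ → ℝ) (t : ℝ) : 0 ≤ energySq u t :=
  mul_nonneg (by norm_num) (integral_nonneg fun x => energyDensity_nonneg u t x.1 x.2)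

theorem energySq_eq_energyNorm_sq (u : ℝ → ℝ → ℝ → ℝ) (t : ℝ) :
    energySq u t = energyNorm u t ^ 2 :=
  (Real.sq_sqrt (energySq_nonneg u t)).symm

namespace EnergySupportedInCone

variable {R : ℝ}

theorem eq_zero_of_notMem_closedBall (hcone : EnergySupportedInCone u R) {t T : ℝ}
    (ht : 0 ≤ t) (hT : t ≤ T) {x : ℝ × ℝ} (hx : x ∉ Metric.closedBall 0 (R + T)) :
    energyDensity u t x.1 x.2 = 0 := by
  rw [mem_closedBall_zero_iff, not_le] at hx
  exact hcone t ht x (by linarith)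

theorem hasDerivAt_energySq (hcone : EnergySupportedInCone u R) (hu : Smooth3 u) {t₀ : ℝ}
    (ht₀ : 0 < t₀) :
    HasDerivAt (energySq u) (∫ x : ℝ × ℝ, pt u t₀ x.1 x.2 * dAlembert u t₀ x.1 x.2) t₀ := by
  have hflux {x : ℝ × ℝ} (hx : x ∉ Metric.closedBall 0 (R + (t₀ + 1))) :=
    energyDensity_eq_zero_iff.1 (hcone.eq_zero_of_notMem_closedBall ht₀.le (by linarith) hx)
  have h := hasDerivAt_integral_weight_mul (w := fun _ _ _ => 1) contDiff_const
    hu.smooth3_energyDensity hu.smooth3_energyFlux1 hu.smooth3_energyFlux2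
    (isCompact_closedBall 0 (R + (t₀ + 1)))
    (eventually_of_mem (Ioo_mem_nhds ht₀ (by linarith : t₀ < t₀ + 1))
      fun t ht x hx => by
        rw [hcone.eq_zero_of_notMem_closedBall ht.1.le ht.2.le hx, mul_zero])
    (fun x hx => by simp [energyFlux1, (hflux hx).1])
    (fun x hx => by simp [energyFlux2, (hflux hx).1])
    (hu.pt_energyDensity t₀)
  simp only [pt_const, p1_const, p2_const, zero_mul, one_mul, sub_zero, zero_add] at h
  rw [show ∫ x : ℝ × ℝ, pt u t₀ x.1 x.2 * dAlembert u t₀ x.1 x.2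
      = 1 / 2 * ∫ x : ℝ × ℝ, 2 * pt u t₀ x.1 x.2 * dAlembert u t₀ x.1 x.2 by
    rw [← integral_const_mul]; congr 1 with x; ring]
  exact h.const_mul (1 / 2)

theorem continuousOn_energySq (hcone : EnergySupportedInCone u R) (hu : Smooth3 u) (T : ℝ) :
    ContinuousOn (energySq u) (Icc 0 T) := by
  have hK := isCompact_closedBall (0 : ℝ × ℝ) (R + T)
  have hc : Continuous fun t =>
      1 / 2 * ∫ x in Metric.closedBall (0 : ℝ × ℝ) (R + T), energyDensity u t x.1 x.2 :=
    continuous_const.mul (continuous_parametric_integral_of_continuous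
      (f := fun t (x : ℝ × ℝ) => energyDensity u t x.1 x.2) hu.smooth3_energyDensity.continuous hK)
  refine hc.continuousOn.congr fun t ht => ?_
  dsimp only
  rw [energySq_eq_integral, setIntegral_eq_integral_of_forall_compl_eq_zero fun x hx =>
    hcone.eq_zero_of_notMem_closedBall ht.1 ht.2 hx]

end EnergySupportedInCone

theorem energySq_sub_energySq_eq {u₁ u₂ : ℝ → ℝ → ℝ → ℝ} {R₁ R₂ : ℝ} (hu₁ : Smooth3 u₁)
    (hu₂ : Smooth3 u₂) (hc₁ : EnergySupportedInCone u₁ R₁) (hc₂ : EnergySupportedInCone u₂ R₂)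
    (hsrc : ∀ t x1 x2, 0 < t →
      pt u₁ t x1 x2 * dAlembert u₁ t x1 x2 = pt u₂ t x1 x2 * dAlembert u₂ t x1 x2)
    {t : ℝ} (ht : 0 ≤ t) : energySq u₁ t - energySq u₂ t = energySq u₁ 0 - energySq u₂ 0 := by
  rcases ht.eq_or_lt with rfl | ht
  · rfl
  obtain ⟨s, -, hs⟩ := exists_hasDerivAt_eq_slope (fun s => energySq u₁ s - energySq u₂ s)
    (fun _ => 0) ht ((hc₁.continuousOn_energySq hu₁ t).sub (hc₂.continuousOn_energySq hu₂ t))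
    fun s hs => by
      have h := (hc₁.hasDerivAt_energySq hu₁ hs.1).sub (hc₂.hasDerivAt_energySq hu₂ hs.1)
      simp_rw [hsrc s _ _ hs.1, sub_self] at h
      exact h
  rw [eq_comm, div_eq_zero_iff, sub_eq_zero] at hs
  exact hs.resolve_right (by linarith)

theorem exists_energyDensity_initial_eq_zero {ε : ℝ} {f g : ℝ → ℝ → ℝ}
    (hf : HasCompactSupport fun p : ℝ × ℝ => f p.1 p.2)
    (hg : HasCompactSupport fun p : ℝ × ℝ => g p.1 p.2)
    (hinit : ∀ x1 x2, u 0 x1 x2 = ε * f x1 x2) (hinitd : ∀ x1 x2, pt u 0 x1 x2 = ε * g x1 x2) :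
    ∃ R : ℝ, ∀ x : ℝ × ℝ, R < ‖x‖ → energyDensity u 0 x.1 x.2 = 0 := by
  obtain ⟨R, hR⟩ := (hf.isCompact.union hg.isCompact).isBounded.subset_closedBall 0
  refine ⟨R, fun x hx => energyDensity_eq_zero_iff.2 ?_⟩
  have hout : x ∉ tsupport (fun p : ℝ × ℝ => f p.1 p.2) ∪ tsupport fun p : ℝ × ℝ => g p.1 p.2 :=
    fun h => by linarith [mem_closedBall_zero_iff.1 (hR h)]
  rw [mem_union, not_or] at hout
  have hu0 : ∀ᶠ y in 𝓝 x, u 0 y.1 y.2 = 0 :=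
    (notMem_tsupport_iff_eventuallyEq.1 hout.1).mono fun y hy => by simp_all
  exact ⟨by rw [hinitd, image_eq_zero_of_notMem_tsupport hout.2, mul_zero],
    p1_eq_zero_of_eventually hu0, p2_eq_zero_of_eventually hu0⟩

namespace IsSolution

variable {ε : ℝ} {f1 f2 g1 g2 : ℝ → ℝ → ℝ} {u1 u2 : ℝ → ℝ → ℝ → ℝ}

theorem pt_mul_dAlembert_fst (hu : IsSolution ε f1 f2 g1 g2 u1 u2) {t : ℝ} (ht : 0 < t)
    (x1 x2 : ℝ) :
    pt u1 t x1 x2 * dAlembert u1 t x1 x2 = -(pt u1 t x1 x2 * pt u2 t x1 x2) ^ 2 := by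
  rw [hu.pde1 t x1 x2 ht]; ring

theorem pt_mul_dAlembert_snd (hu : IsSolution ε f1 f2 g1 g2 u1 u2) {t : ℝ} (ht : 0 < t)
    (x1 x2 : ℝ) :
    pt u2 t x1 x2 * dAlembert u2 t x1 x2 = -(pt u1 t x1 x2 * pt u2 t x1 x2) ^ 2 := by
  rw [hu.pde2 t x1 x2 ht]; ring

end IsSolution

theorem not_both_energies_decay_general (ε : ℝ) (f1 f2 g1 g2 : ℝ → ℝ → ℝ)
    (hf1 : SmoothCompact2 f1) (hf2 : SmoothCompact2 f2)
    (hg1 : SmoothCompact2 g1) (hg2 : SmoothCompact2 g2)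
    (u1 u2 : ℝ → ℝ → ℝ → ℝ) (hu : IsSolution ε f1 f2 g1 g2 u1 u2)
    (hne : energyNorm u1 0 ≠ energyNorm u2 0) :
    ¬ (Tendsto (fun t => energyNorm u1 t) atTop (nhds 0) ∧
        Tendsto (fun t => energyNorm u2 t) atTop (nhds 0)) := by
  rintro ⟨h1, h2⟩
  obtain ⟨R₁, hR₁⟩ := exists_energyDensity_initial_eq_zero hf1.2 hg1.2 hu.init1 hu.initd1
  obtain ⟨R₂, hR₂⟩ := exists_energyDensity_initial_eq_zero hf2.2 hg2.2 hu.init2 hu.initd2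
  have hc₁ := energySupportedInCone_of_dissipative hu.smooth1 (fun t x1 x2 ht =>
    (hu.pt_mul_dAlembert_fst ht x1 x2).trans_le (neg_nonpos.2 (sq_nonneg _))) hR₁
  have hc₂ := energySupportedInCone_of_dissipative hu.smooth2 (fun t x1 x2 ht =>
    (hu.pt_mul_dAlembert_snd ht x1 x2).trans_le (neg_nonpos.2 (sq_nonneg _))) hR₂
  have hconst : ∀ᶠ t in atTop, energySq u1 t - energySq u2 t = energySq u1 0 - energySq u2 0 :=
    (eventually_ge_atTop 0).mono fun t ht =>
      energySq_sub_energySq_eq hu.smooth1 hu.smooth2 hc₁ hc₂ (fun s x1 x2 hs =>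
        (hu.pt_mul_dAlembert_fst hs x1 x2).trans (hu.pt_mul_dAlembert_snd hs x1 x2).symm) ht
  have hlim : Tendsto (fun t => energySq u1 t - energySq u2 t) atTop (𝓝 0) := by
    simpa [energySq_eq_energyNorm_sq] using (h1.pow 2).sub (h2.pow 2)
  have h0 : energySq u1 0 = energySq u2 0 :=
    sub_eq_zero.1 (tendsto_nhds_unique (tendsto_const_nhds.congr' (EventuallyEq.symm hconst)) hlim)
  exact hne (by rw [energyNorm, energyNorm, h0])

/-- if the initial energies differ, not both energies decay to zero. -/
theorem not_both_energies_decay (ε : ℝ) (hε : 0 < ε) (f1 f2 g1 g2 : ℝ → ℝ → ℝ)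
    (hf1 : SmoothCompact2 f1) (hf2 : SmoothCompact2 f2)
    (hg1 : SmoothCompact2 g1) (hg2 : SmoothCompact2 g2)
    (u1 u2 : ℝ → ℝ → ℝ → ℝ) (hu : IsSolution ε f1 f2 g1 g2 u1 u2)
    (hne : energyNorm u1 0 ≠ energyNorm u2 0) :
    ¬ (Tendsto (fun t => energyNorm u1 t) atTop (nhds 0) ∧
        Tendsto (fun t => energyNorm u2 t) atTop (nhds 0)) :=
  not_both_energies_decay_general ε f1 f2 g1 g2 hf1 hf2 hg1 hg2 u1 u2 hu hne

end
end

section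
/- Let φ₀, φ₁ ∈ C₀^∞(ℝ²). There is a constant C = C(φ₀,φ₁) > 0 such that |∂_σF₀[φ₀,φ₁](σ,ω)| ≤ C⟨σ⟩^{−3/2} for all (σ,ω) ∈ ℝ×S¹. -/
open Real MeasureTheory Filter Topology

noncomputable section

/-!
Write `g_φ(s) = R[φ](s, ω)`. Then `R₂[φ] = c · (k ⋆ g_φ)` for the Abel kernel
`k(t) = (-t)^{-1/2}` on `t < 0`, which is locally integrable, so `σ`-derivatives fall on `g_φ`;
and `∂_s g_φ = g_{ω·∇φ}` by differentiating under the line integral. Hence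
`∂_σ F₀ = c · (k ⋆ W')` with `W = g_{φ₁} - g_{ω·∇φ₀}` supported in `[-R, R]`. This vanishes for
`σ ≥ R` and is `O(√R)` for `-2R ≤ σ ≤ R`; for `σ < -2R` an integration by parts puts the
derivative on `(s - σ)^{-1/2}`, which yields the decay `|σ|^{-3/2}`. The constants only involve
`R` and sup norms of `φ₁, ∇φ₁, ∇φ₀, ∇²φ₀`, hence are uniform in `ω ∈ S¹`.
-/

open scoped Convolution

theorem rpow_neg_three_halves {x : ℝ} (hx : 0 < x) : x ^ (-(3 : ℝ) / 2) = (x * √x)⁻¹ := by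
  rw [show -(3 : ℝ) / 2 = -(1 + 1 / 2) by norm_num, Real.rpow_neg hx.le,
    Real.rpow_add hx, Real.rpow_one, Real.sqrt_eq_rpow]

theorem one_le_jb (σ : ℝ) : 1 ≤ jb σ :=
  Real.le_sqrt_of_sq_le (by nlinarith)

theorem jb_le_one_add_abs (σ : ℝ) : jb σ ≤ 1 + |σ| :=
  Real.sqrt_le_iff.2 ⟨by positivity, by nlinarith [sq_abs σ, abs_nonneg σ]⟩

theorem le_abs_of_notMem_Ioc {R τ : ℝ} (h : τ ∉ Set.Ioc (-R) R) : R ≤ |τ| := by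
  rcases not_and_or.1 (Set.mem_Ioc.not.1 h) with h | h
  · linarith [neg_le_abs τ, not_lt.1 h]
  · linarith [le_abs_self τ, not_le.1 h]

theorem inv_sqrt_eq_rpow {x : ℝ} (hx : 0 ≤ x) : (√x)⁻¹ = x ^ (-(1 / 2) : ℝ) := by
  rw [Real.sqrt_eq_rpow, Real.rpow_neg hx]

theorem integral_inv_sqrt {L : ℝ} (hL : 0 ≤ L) : ∫ x in (0 : ℝ)..L, (√x)⁻¹ = 2 * √L := by
  rw [intervalIntegral.integral_congr fun x hx => inv_sqrt_eq_rpow (x := x)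
      (by rw [Set.uIcc_of_le hL] at hx; exact hx.1),
    integral_rpow (Or.inl (by norm_num)), Real.sqrt_eq_rpow]
  norm_num
  ring

theorem intervalIntegrable_inv_sqrt {L : ℝ} (hL : 0 ≤ L) :
    IntervalIntegrable (fun x => (√x)⁻¹) volume 0 L := by
  refine (intervalIntegral.intervalIntegrable_rpow' (r := -(1 / 2)) (by norm_num)).congr ?_
  intro x hx
  rw [Set.uIoc_of_le hL] at hx
  exact (inv_sqrt_eq_rpow hx.1.le).symm

def abelKernel (t : ℝ) : ℝ := (√(-t))⁻¹

theorem locallyIntegrable_abelKernel : LocallyIntegrable abelKernel := by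
  refine locallyIntegrable_of_norm_le_rpow (C := 1) (α := 1 / 2) (by simp) (by norm_num)
    (Eventually.of_forall fun t => ?_) (by unfold abelKernel; fun_prop)
  rcases le_or_gt 0 t with ht | ht
  · simpa [abelKernel, Real.sqrt_eq_zero'.2 (neg_nonpos.2 ht)] using
      Real.rpow_nonneg (abs_nonneg t) _
  · rw [one_mul, abelKernel, Real.norm_eq_abs, Real.norm_eq_abs, abs_of_neg ht,
      abs_inv, abs_of_nonneg (Real.sqrt_nonneg _), Real.sqrt_eq_rpow,
      ← Real.rpow_neg (by linarith)]

theorem abelKernel_convolution_apply (G : ℝ → ℝ) (σ : ℝ) :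
    (abelKernel ⋆ G) σ = ∫ s, G s / √(s - σ) := by
  rw [convolution_def, ← integral_sub_left_eq_self _ _ σ]
  congr 1 with s
  simp only [abelKernel, ContinuousLinearMap.lsmul_apply, smul_eq_mul, sub_sub_cancel, neg_sub]
  ring

theorem setIntegral_Ioi_div_sqrt_eq (G : ℝ → ℝ) (σ : ℝ) :
    ∫ s in Set.Ioi σ, G s / √(s - σ) = (abelKernel ⋆ G) σ := by
  rw [abelKernel_convolution_apply]
  refine setIntegral_eq_integral_of_forall_compl_eq_zero fun s hs => ?_
  rw [Real.sqrt_eq_zero'.2 (by simpa using hs), div_zero]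

theorem hasDerivAt_abelKernel_convolution {G G' : ℝ → ℝ} (hG : HasCompactSupport G)
    (hd : ∀ s, HasDerivAt G (G' s) s) (hG' : Continuous G') (σ : ℝ) :
    HasDerivAt (abelKernel ⋆ G) ((abelKernel ⋆ G') σ) σ := by
  have hG'_eq : deriv G = G' := funext fun s => (hd s).deriv
  have hC1 : ContDiff ℝ 1 G :=
    contDiff_one_iff_deriv.2 ⟨fun s => (hd s).differentiableAt, hG'_eq ▸ hG'⟩
  simpa [hG'_eq] using hG.hasDerivAt_convolution_right _ locallyIntegrable_abelKernel hC1 σ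

theorem abelKernel_convolution_sub {G₁ G₂ : ℝ → ℝ} (hG₁ : HasCompactSupport G₁)
    (hG₂ : HasCompactSupport G₂) (hc₁ : Continuous G₁) (hc₂ : Continuous G₂) (σ : ℝ) :
    (abelKernel ⋆ (G₁ - G₂)) σ = (abelKernel ⋆ G₁) σ - (abelKernel ⋆ G₂) σ := by
  simp only [convolution_def, Pi.sub_apply, map_sub]
  exact integral_sub (hG₁.convolutionExists_right _ locallyIntegrable_abelKernel hc₁ σ)
    (hG₂.convolutionExists_right _ locallyIntegrable_abelKernel hc₂ σ)

theorem abelKernel_convolution_eq_zero_of_le {G : ℝ → ℝ} {R σ : ℝ} (hG : ∀ s, R ≤ s → G s = 0)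
    (hσ : R ≤ σ) : (abelKernel ⋆ G) σ = 0 := by
  rw [abelKernel_convolution_apply]
  refine integral_eq_zero_of_ae (ae_of_all _ fun s => ?_)
  rcases le_or_gt s σ with h | h
  · simp [Real.sqrt_eq_zero'.2 (sub_nonpos.2 h)]
  · simp [hG s (by linarith)]

theorem abs_abelKernel_convolution_le_sqrt {G : ℝ → ℝ} {R M σ : ℝ} (hG0 : ∀ s, R ≤ s → G s = 0)
    (hG : ∀ s, |G s| ≤ M) (hσ : σ ≤ R) : |(abelKernel ⋆ G) σ| ≤ 2 * M * √(R - σ) := by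
  have hsupp : Function.support (fun s => G s / √(s - σ)) ⊆ Set.Ioc σ R := by
    refine Function.support_subset_iff'.2 fun s hs => ?_
    rcases not_and_or.1 (Set.mem_Ioc.not.1 hs) with h | h
    · simp [Real.sqrt_eq_zero'.2 (sub_nonpos.2 (not_lt.1 h))]
    · simp [hG0 s (not_le.1 h).le]
  have hint : IntervalIntegrable (fun s => M * (√(s - σ))⁻¹) volume σ R := by
    have := (intervalIntegrable_inv_sqrt (sub_nonneg.2 hσ)).comp_sub_right σ
    rw [zero_add, sub_add_cancel] at this
    exact this.const_mul M
  rw [abelKernel_convolution_apply, ← intervalIntegral.integral_eq_integral_of_support_subset hsupp,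
    ← Real.norm_eq_abs]
  calc ‖∫ s in σ..R, G s / √(s - σ)‖ ≤ ∫ s in σ..R, M * (√(s - σ))⁻¹ := by
        refine intervalIntegral.norm_integral_le_of_norm_le hσ
          (Eventually.of_forall fun s _ => ?_) hint
        rw [div_eq_mul_inv, norm_mul, Real.norm_eq_abs, norm_inv, Real.norm_eq_abs,
          abs_of_nonneg (Real.sqrt_nonneg _)]
        exact mul_le_mul_of_nonneg_right (hG s) (by positivity)
    _ = 2 * M * √(R - σ) := by
        rw [intervalIntegral.integral_const_mul,
          intervalIntegral.integral_comp_sub_right (fun x => (√x)⁻¹), sub_self,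
          integral_inv_sqrt (sub_nonneg.2 hσ)]
        ring

theorem abelKernel_convolution_deriv_eq_of_lt_neg {W W' : ℝ → ℝ} {R σ : ℝ} (hR : 0 ≤ R)
    (hd : ∀ s, HasDerivAt W (W' s) s) (hW' : Continuous W')
    (hW0 : ∀ s, R ≤ |s| → W s = 0) (hW'0 : ∀ s, R ≤ |s| → W' s = 0) (hσ : σ < -R) :
    (abelKernel ⋆ W') σ = ∫ s in -R..R, (s - σ) ^ (-(3 : ℝ) / 2) / 2 * W s := by
  have hpos : ∀ s ∈ Set.uIcc (-R) R, 0 < s - σ := fun s hs => by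
    rw [Set.uIcc_of_le (by linarith)] at hs; linarith [hs.1]
  have hu : ∀ s ∈ Set.uIcc (-R) R, HasDerivAt (fun s => (s - σ) ^ (-(1 / 2) : ℝ))
      (-((s - σ) ^ (-(3 : ℝ) / 2) / 2)) s := by
    intro s hs
    refine (((hasDerivAt_id s).sub_const σ).rpow_const (p := -(1 / 2))
      (Or.inl (hpos s hs).ne')).congr_deriv ?_
    rw [show -(1 / 2 : ℝ) - 1 = -(3 : ℝ) / 2 by norm_num, id]
    ring
  have hu'c : ContinuousOn (fun s => -((s - σ) ^ (-(3 : ℝ) / 2) / 2)) (Set.uIcc (-R) R) :=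
    ((ContinuousOn.rpow_const (by fun_prop) fun s hs => Or.inl (hpos s hs).ne').div_const _).neg
  have hsupp : Function.support (fun s => W' s / √(s - σ)) ⊆ Set.Ioc (-R) R :=
    Function.support_subset_iff'.2 fun s hs => by
      rw [hW'0 s (le_abs_of_notMem_Ioc hs), zero_div]
  rw [abelKernel_convolution_apply, ← intervalIntegral.integral_eq_integral_of_support_subset hsupp,
    intervalIntegral.integral_congr fun s hs => show W' s / √(s - σ) =
      (s - σ) ^ (-(1 / 2) : ℝ) * W' s by
        rw [div_eq_mul_inv, inv_sqrt_eq_rpow (hpos s hs).le, mul_comm],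
    intervalIntegral.integral_mul_deriv_eq_deriv_mul hu (fun s _ => hd s)
      hu'c.intervalIntegrable (hW'.intervalIntegrable _ _),
    hW0 R (le_abs_self R), hW0 (-R) (by rw [abs_neg]; exact le_abs_self R)]
  simp

theorem abs_abelKernel_convolution_deriv_le_of_lt_neg {W W' : ℝ → ℝ} {R M σ : ℝ} (hR : 0 ≤ R)
    (hd : ∀ s, HasDerivAt W (W' s) s) (hW' : Continuous W')
    (hW0 : ∀ s, R ≤ |s| → W s = 0) (hW'0 : ∀ s, R ≤ |s| → W' s = 0)
    (hW : ∀ s, |W s| ≤ M) (hσ : σ < -R) :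
    |(abelKernel ⋆ W') σ| ≤ R * M * (-σ - R) ^ (-(3 : ℝ) / 2) := by
  have hm : 0 ≤ (-σ - R) ^ (-(3 : ℝ) / 2) := Real.rpow_nonneg (by linarith) _
  rw [abelKernel_convolution_deriv_eq_of_lt_neg hR hd hW' hW0 hW'0 hσ, ← Real.norm_eq_abs]
  calc _ ≤ (-σ - R) ^ (-(3 : ℝ) / 2) / 2 * M * |R - -R| := by
        refine intervalIntegral.norm_integral_le_of_norm_le_const fun s hs => ?_
        rw [Set.uIoc_of_le (by linarith)] at hs
        rw [norm_mul, Real.norm_eq_abs, Real.norm_eq_abs,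
          abs_of_nonneg (div_nonneg (Real.rpow_nonneg (by linarith [hs.1]) _) zero_le_two)]
        refine mul_le_mul (div_le_div_of_nonneg_right ?_ zero_le_two) (hW s) (abs_nonneg _)
          (by positivity)
        exact Real.rpow_le_rpow_of_nonpos (by linarith) (by linarith [hs.1]) (by norm_num)
    _ = R * M * (-σ - R) ^ (-(3 : ℝ) / 2) := by
        rw [abs_of_nonneg (by linarith)]
        ring

theorem abs_abelKernel_convolution_deriv_le {W W' : ℝ → ℝ} {R M : ℝ} (hR : 1 ≤ R)
    (hd : ∀ s, HasDerivAt W (W' s) s) (hW'c : Continuous W')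
    (hW0 : ∀ s, R ≤ |s| → W s = 0) (hW'0 : ∀ s, R ≤ |s| → W' s = 0)
    (hW : ∀ s, |W s| ≤ M) (hW' : ∀ s, |W' s| ≤ M) (σ : ℝ) :
    |(abelKernel ⋆ W') σ| ≤ 18 * M * R ^ 2 * jb σ ^ (-(3 : ℝ) / 2) := by
  have hM : 0 ≤ M := (abs_nonneg _).trans (hW 0)
  have hj : 0 < jb σ := one_pos.trans_le (one_le_jb σ)
  rw [rpow_neg_three_halves hj]
  rcases le_or_gt R σ with hσR | hσR
  · rw [abelKernel_convolution_eq_zero_of_le (fun s hs => hW'0 s (hs.trans (le_abs_self s))) hσR,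
      abs_zero]
    positivity
  rcases le_or_gt (-(2 * R)) σ with hσ | hσ
  · have hjR : jb σ ≤ 3 * R :=
      (jb_le_one_add_abs σ).trans (by linarith [abs_le.2 ⟨hσ, (by linarith : σ ≤ 2 * R)⟩])
    calc |(abelKernel ⋆ W') σ| ≤ 2 * M * √(R - σ) :=
          abs_abelKernel_convolution_le_sqrt (fun s hs => hW'0 s (hs.trans (le_abs_self s)))
            hW' hσR.le
      _ ≤ 2 * M * √(3 * R) := by gcongr; linarith
      _ = 18 * M * R ^ 2 * (3 * R * √(3 * R))⁻¹ := by
          have : 0 < √(3 * R) := Real.sqrt_pos.2 (by linarith)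
          field_simp
          rw [Real.sq_sqrt (by linarith)]
          ring
      _ ≤ 18 * M * R ^ 2 * (jb σ * √(jb σ))⁻¹ := by gcongr
  · have hjm : jb σ / 4 ≤ -σ - R := by
      have := jb_le_one_add_abs σ
      rw [abs_of_neg (by linarith)] at this
      linarith
    calc |(abelKernel ⋆ W') σ| ≤ R * M * (-σ - R) ^ (-(3 : ℝ) / 2) :=
          abs_abelKernel_convolution_deriv_le_of_lt_neg (by linarith) hd hW'c hW0 hW'0 hW
            (by linarith)
      _ = R * M * ((-σ - R) * √(-σ - R))⁻¹ := by rw [rpow_neg_three_halves (by linarith)]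
      _ ≤ R * M * (jb σ / 4 * √(jb σ / 4))⁻¹ := by gcongr; linarith
      _ = 8 * R * M * (jb σ * √(jb σ))⁻¹ := by
          rw [Real.sqrt_div' _ (by norm_num : (0 : ℝ) ≤ 4),
            show (4 : ℝ) = 2 ^ 2 by norm_num, Real.sqrt_sq (by norm_num)]
          field_simp
          ring
      _ ≤ 18 * M * R ^ 2 * (jb σ * √(jb σ))⁻¹ := by
          gcongr ?_ * _
          nlinarith [mul_le_mul_of_nonneg_left hR (by positivity : 0 ≤ M * R)]

theorem eq_zero_of_snd_notMem_image_tsupport {F : ℝ → ℝ → ℝ} {s τ : ℝ}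
    (hτ : τ ∉ Prod.snd '' tsupport (Function.uncurry F)) : F s τ = 0 :=
  image_eq_zero_of_notMem_tsupport (f := Function.uncurry F) (x := (s, τ))
    fun h => hτ ⟨_, h, rfl⟩

theorem hasDerivAt_integral_of_hasCompactSupport {F F' : ℝ → ℝ → ℝ}
    (hF : Continuous (Function.uncurry F)) (hF' : Continuous (Function.uncurry F'))
    (hFc : HasCompactSupport (Function.uncurry F))
    (hF'c : HasCompactSupport (Function.uncurry F'))
    (hd : ∀ s τ, HasDerivAt (F · τ) (F' s τ) s) (s₀ : ℝ) :
    HasDerivAt (fun s => ∫ τ, F s τ) (∫ τ, F' s₀ τ) s₀ := by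
  obtain ⟨C, hC⟩ := hF'.bounded_above_of_compact_support hF'c
  set K := Prod.snd '' tsupport (Function.uncurry F')
  have hK : IsCompact K := hF'c.image continuous_snd
  have hslice : ∀ s, Continuous (F s) := fun s => hF.comp (Continuous.prodMk_right s)
  have hslice' : Continuous (F' s₀) := hF'.comp (Continuous.prodMk_right s₀)
  have hint : Integrable (F s₀) := (hslice s₀).integrable_of_hasCompactSupport <|
    HasCompactSupport.intro (hFc.image continuous_snd) fun _ hτ =>
      eq_zero_of_snd_notMem_image_tsupport hτ
  refine (hasDerivAt_integral_of_dominated_loc_of_deriv_le (bound := K.indicator fun _ => C)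
    Filter.univ_mem (Eventually.of_forall fun s => (hslice s).aestronglyMeasurable) hint
    hslice'.aestronglyMeasurable (ae_of_all _ fun τ s _ => ?_)
    ((integrable_indicator_iff hK.measurableSet).2 (integrableOn_const hK.measure_lt_top.ne))
    (ae_of_all _ fun τ s _ => hd s τ)).2
  by_cases hτ : τ ∈ K
  · rw [Set.indicator_of_mem hτ]
    exact hC (s, τ)
  · rw [Set.indicator_of_notMem hτ, eq_zero_of_snd_notMem_image_tsupport hτ, norm_zero]

def dirDeriv (ω1 ω2 : ℝ) (f : ℝ → ℝ → ℝ) : ℝ → ℝ → ℝ :=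
  fun x y => fderiv ℝ (Function.uncurry f) (x, y) (ω1, ω2)

theorem tsupport_dirDeriv_subset (ω1 ω2 : ℝ) (f : ℝ → ℝ → ℝ) :
    tsupport (Function.uncurry (dirDeriv ω1 ω2 f)) ⊆ tsupport (Function.uncurry f) :=
  tsupport_fderiv_apply_subset ℝ (ω1, ω2)

theorem smoothCompact2_dirDeriv {f : ℝ → ℝ → ℝ} (hf : SmoothCompact2 f) (ω1 ω2 : ℝ) :
    SmoothCompact2 (dirDeriv ω1 ω2 f) :=
  ⟨(hf.1.fderiv_right le_rfl).clm_apply contDiff_const, hf.2.fderiv_apply ℝ (ω1, ω2)⟩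

theorem norm_le_one_of_sq_add_sq_eq_one {ω1 ω2 : ℝ} (hω : ω1 ^ 2 + ω2 ^ 2 = 1) :
    ‖((ω1, ω2) : ℝ × ℝ)‖ ≤ 1 :=
  max_le (sq_le_one_iff_abs_le_one _ |>.1 (by nlinarith))
    (sq_le_one_iff_abs_le_one _ |>.1 (by nlinarith))

theorem abs_dirDeriv_le {ω1 ω2 : ℝ} (hω : ω1 ^ 2 + ω2 ^ 2 = 1) (f : ℝ → ℝ → ℝ) (x y : ℝ) :
    |dirDeriv ω1 ω2 f x y| ≤ ‖fderiv ℝ (Function.uncurry f) (x, y)‖ :=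
  ((fderiv ℝ (Function.uncurry f) (x, y)).le_opNorm _).trans
    (mul_le_of_le_one_right (norm_nonneg _) (norm_le_one_of_sq_add_sq_eq_one hω))

theorem abs_dirDeriv_dirDeriv_le {ω1 ω2 : ℝ} (hω : ω1 ^ 2 + ω2 ^ 2 = 1) {f : ℝ → ℝ → ℝ}
    (hf : ContDiff ℝ 2 (Function.uncurry f)) (x y : ℝ) :
    |dirDeriv ω1 ω2 (dirDeriv ω1 ω2 f) x y| ≤
      ‖fderiv ℝ (fderiv ℝ (Function.uncurry f)) (x, y)‖ := by
  have hdiff : DifferentiableAt ℝ (fderiv ℝ (Function.uncurry f)) (x, y) :=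
    (hf.fderiv_right (m := 1) le_rfl).differentiable one_ne_zero _
  have hω1 := norm_le_one_of_sq_add_sq_eq_one hω
  have : dirDeriv ω1 ω2 (dirDeriv ω1 ω2 f) x y =
      fderiv ℝ (fderiv ℝ (Function.uncurry f)) (x, y) (ω1, ω2) (ω1, ω2) := by
    change fderiv ℝ (fun p => fderiv ℝ (Function.uncurry f) p (ω1, ω2)) (x, y) (ω1, ω2) = _
    rw [fderiv_clm_apply hdiff (differentiableAt_const _)]
    simp
  rw [this, ← Real.norm_eq_abs]
  calc _ ≤ ‖fderiv ℝ (fderiv ℝ (Function.uncurry f)) (x, y)‖ * ‖((ω1, ω2) : ℝ × ℝ)‖ *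
        ‖((ω1, ω2) : ℝ × ℝ)‖ := ContinuousLinearMap.le_opNorm₂ _ _ _
    _ ≤ ‖fderiv ℝ (fderiv ℝ (Function.uncurry f)) (x, y)‖ * 1 * 1 := by gcongr
    _ = _ := by ring

theorem SmoothCompact2.exists_bound {f : ℝ → ℝ → ℝ} (hf : SmoothCompact2 f) :
    ∃ B, 0 < B ∧ ∀ ω1 ω2 : ℝ, ω1 ^ 2 + ω2 ^ 2 = 1 → ∀ x y : ℝ,
      |f x y| ≤ B ∧ |dirDeriv ω1 ω2 f x y| ≤ B ∧
        |dirDeriv ω1 ω2 (dirDeriv ω1 ω2 f) x y| ≤ B := by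
  obtain ⟨C₀, hC₀⟩ := hf.1.continuous.bounded_above_of_compact_support hf.2
  obtain ⟨C₁, hC₁⟩ := (hf.1.continuous_fderiv (by norm_num)).bounded_above_of_compact_support
    (hf.2.fderiv ℝ)
  obtain ⟨C₂, hC₂⟩ := ((hf.1.fderiv_right (m := (⊤ : ℕ∞)) le_rfl).continuous_fderiv
    (by norm_num)).bounded_above_of_compact_support ((hf.2.fderiv ℝ).fderiv ℝ)
  refine ⟨|C₀| + |C₁| + |C₂| + 1, by positivity, fun ω1 ω2 hω x y => ⟨?_, ?_, ?_⟩⟩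
  · exact (hC₀ (x, y)).trans (by linarith [le_abs_self C₀, abs_nonneg C₁, abs_nonneg C₂])
  · exact (abs_dirDeriv_le hω f x y).trans <| (hC₁ (x, y)).trans
      (by linarith [le_abs_self C₁, abs_nonneg C₀, abs_nonneg C₂])
  · exact (abs_dirDeriv_dirDeriv_le hω (hf.1.of_le ENat.LEInfty.out) x y).trans <|
      (hC₂ (x, y)).trans (by linarith [le_abs_self C₂, abs_nonneg C₀, abs_nonneg C₁])

def radonCoords {ω1 ω2 : ℝ} (hω : ω1 ^ 2 + ω2 ^ 2 = 1) : ℝ × ℝ ≃ₜ ℝ × ℝ where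
  toFun p := (p.1 * ω1 - p.2 * ω2, p.1 * ω2 + p.2 * ω1)
  invFun p := (p.1 * ω1 + p.2 * ω2, p.2 * ω1 - p.1 * ω2)
  left_inv p := by
    ext
    · linear_combination p.1 * hω
    · linear_combination p.2 * hω
  right_inv p := by
    ext
    · linear_combination p.1 * hω
    · linear_combination p.2 * hω
  continuous_toFun := by fun_prop
  continuous_invFun := by fun_prop

theorem abs_le_radius_radonCoords {ω1 ω2 : ℝ} (hω : ω1 ^ 2 + ω2 ^ 2 = 1) (s τ : ℝ) :
    |s| ≤ radius (s * ω1 - τ * ω2) (s * ω2 + τ * ω1) ∧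
      |τ| ≤ radius (s * ω1 - τ * ω2) (s * ω2 + τ * ω1) := by
  have h : (s * ω1 - τ * ω2) ^ 2 + (s * ω2 + τ * ω1) ^ 2 = s ^ 2 + τ ^ 2 := by
    linear_combination (s ^ 2 + τ ^ 2) * hω
  exact ⟨Real.abs_le_sqrt (by nlinarith), Real.abs_le_sqrt (by nlinarith)⟩

theorem eq_zero_of_le_radius {f : ℝ → ℝ → ℝ} {R : ℝ}
    (hR : ∀ p ∈ tsupport (Function.uncurry f), radius p.1 p.2 < R) {x y : ℝ}
    (h : R ≤ radius x y) : f x y = 0 :=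
  image_eq_zero_of_notMem_tsupport (f := Function.uncurry f) (x := (x, y))
    fun hp => (hR _ hp).not_ge h

theorem Rline_eq_zero {f : ℝ → ℝ → ℝ} {R ω1 ω2 s : ℝ}
    (hR : ∀ p ∈ tsupport (Function.uncurry f), radius p.1 p.2 < R)
    (hω : ω1 ^ 2 + ω2 ^ 2 = 1) (hs : R ≤ |s|) : Rline f s ω1 ω2 = 0 :=
  integral_eq_zero_of_ae <| ae_of_all _ fun τ =>
    eq_zero_of_le_radius hR (hs.trans (abs_le_radius_radonCoords hω s τ).1)

theorem abs_Rline_le {f : ℝ → ℝ → ℝ} {R B ω1 ω2 : ℝ}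
    (hR : ∀ p ∈ tsupport (Function.uncurry f), radius p.1 p.2 < R) (hR0 : 0 ≤ R)
    (hB : ∀ x y, |f x y| ≤ B) (hω : ω1 ^ 2 + ω2 ^ 2 = 1) (s : ℝ) :
    |Rline f s ω1 ω2| ≤ 2 * R * B := by
  have hsupp : Function.support (fun τ => f (s * ω1 - τ * ω2) (s * ω2 + τ * ω1)) ⊆
      Set.Ioc (-R) R := Function.support_subset_iff'.2 fun τ hτ =>
    eq_zero_of_le_radius hR ((le_abs_of_notMem_Ioc hτ).trans (abs_le_radius_radonCoords hω s τ).2)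
  rw [Rline, ← intervalIntegral.integral_eq_integral_of_support_subset hsupp, ← Real.norm_eq_abs]
  calc _ ≤ B * |R - -R| :=
        intervalIntegral.norm_integral_le_of_norm_le_const fun τ _ => hB _ _
    _ = 2 * R * B := by rw [abs_of_nonneg (by linarith)]; ring

theorem hasDerivAt_Rline {f : ℝ → ℝ → ℝ} {ω1 ω2 : ℝ}
    (hf : ContDiff ℝ 1 (Function.uncurry f)) (hc : HasCompactSupport (Function.uncurry f))
    (hω : ω1 ^ 2 + ω2 ^ 2 = 1) (s : ℝ) :
    HasDerivAt (fun s => Rline f s ω1 ω2) (Rline (dirDeriv ω1 ω2 f) s ω1 ω2) s := by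
  refine hasDerivAt_integral_of_hasCompactSupport
    (F := fun s τ => f (s * ω1 - τ * ω2) (s * ω2 + τ * ω1))
    (F' := fun s τ => dirDeriv ω1 ω2 f (s * ω1 - τ * ω2) (s * ω2 + τ * ω1))
    (hf.continuous.comp (radonCoords hω).continuous)
    (((hf.continuous_fderiv one_ne_zero).clm_apply continuous_const).comp
      (radonCoords hω).continuous)
    (hc.comp_homeomorph (radonCoords hω))
    ((hc.fderiv_apply ℝ (ω1, ω2)).comp_homeomorph (radonCoords hω)) (fun s τ => ?_) s
  have hline : HasDerivAt (fun s => ((s * ω1 - τ * ω2, s * ω2 + τ * ω1) : ℝ × ℝ)) (ω1, ω2) s :=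
    (((hasDerivAt_id s).mul_const ω1).sub_const _).prodMk
      (((hasDerivAt_id s).mul_const ω2).add_const _) |>.congr_deriv (by simp)
  exact ((hf.differentiable one_ne_zero _).hasFDerivAt).comp_hasDerivAt s hline

theorem exists_radius_of_hasCompactSupport {f : ℝ → ℝ → ℝ}
    (hc : HasCompactSupport (Function.uncurry f)) :
    ∃ R, 1 ≤ R ∧ ∀ p ∈ tsupport (Function.uncurry f), radius p.1 p.2 < R := by
  obtain ⟨C, hC⟩ := hc.isCompact.exists_bound_of_continuousOn
    (f := fun p : ℝ × ℝ => radius p.1 p.2) (by unfold radius; fun_prop)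
  refine ⟨|C| + 1, by linarith [abs_nonneg C], fun p hp => ?_⟩
  linarith [le_abs_self (radius p.1 p.2), (Real.norm_eq_abs _).symm.trans_le (hC p hp),
    le_abs_self C]

theorem continuous_Rline {f : ℝ → ℝ → ℝ} (hf : SmoothCompact2 f) {ω1 ω2 : ℝ}
    (hω : ω1 ^ 2 + ω2 ^ 2 = 1) : Continuous (fun s => Rline f s ω1 ω2) :=
  continuous_iff_continuousAt.2 fun s =>
    (hasDerivAt_Rline (hf.1.of_le ENat.LEInfty.out) hf.2 hω s).continuousAt

theorem hasCompactSupport_Rline {f : ℝ → ℝ → ℝ} (hc : HasCompactSupport (Function.uncurry f))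
    {ω1 ω2 : ℝ} (hω : ω1 ^ 2 + ω2 ^ 2 = 1) : HasCompactSupport (fun s => Rline f s ω1 ω2) := by
  obtain ⟨R, -, hR⟩ := exists_radius_of_hasCompactSupport hc
  exact HasCompactSupport.intro (isCompact_Icc (a := -R) (b := R)) fun s hs =>
    Rline_eq_zero hR hω (le_abs_of_notMem_Ioc fun h => hs (Set.Ioc_subset_Icc_self h))

theorem hasDerivAt_abelKernel_convolution_Rline {f : ℝ → ℝ → ℝ} (hf : SmoothCompact2 f)
    {ω1 ω2 : ℝ} (hω : ω1 ^ 2 + ω2 ^ 2 = 1) (σ : ℝ) :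
    HasDerivAt (abelKernel ⋆ fun s => Rline f s ω1 ω2)
      ((abelKernel ⋆ fun s => Rline (dirDeriv ω1 ω2 f) s ω1 ω2) σ) σ :=
  hasDerivAt_abelKernel_convolution (hasCompactSupport_Rline hf.2 hω)
    (hasDerivAt_Rline (hf.1.of_le ENat.LEInfty.out) hf.2 hω)
    (continuous_Rline (smoothCompact2_dirDeriv hf ω1 ω2) hω) σ

theorem R2_eq_abelKernel_convolution (φ : ℝ → ℝ → ℝ) (σ ω1 ω2 : ℝ) :
    R2 φ σ ω1 ω2 = 1 / (2 * √2 * π) * (abelKernel ⋆ fun s => Rline φ s ω1 ω2) σ := by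
  rw [R2, setIntegral_Ioi_div_sqrt_eq]

theorem dF0_eq_abelKernel_convolution {φ0 φ1 : ℝ → ℝ → ℝ} (hφ0 : SmoothCompact2 φ0)
    (hφ1 : SmoothCompact2 φ1) {ω1 ω2 : ℝ} (hω : ω1 ^ 2 + ω2 ^ 2 = 1) (σ : ℝ) :
    dF0 φ0 φ1 σ ω1 ω2 = 1 / (2 * √2 * π) *
      (abelKernel ⋆ ((fun s => Rline (dirDeriv ω1 ω2 φ1) s ω1 ω2) -
        fun s => Rline (dirDeriv ω1 ω2 (dirDeriv ω1 ω2 φ0)) s ω1 ω2)) σ := by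
  have hdφ0 := smoothCompact2_dirDeriv hφ0 ω1 ω2
  have hF0 : (fun σ => F0 φ0 φ1 σ ω1 ω2) = fun σ => 1 / (2 * √2 * π) *
      (-(abelKernel ⋆ fun s => Rline (dirDeriv ω1 ω2 φ0) s ω1 ω2) σ +
        (abelKernel ⋆ fun s => Rline φ1 s ω1 ω2) σ) := by
    funext σ
    simp only [F0, R2_eq_abelKernel_convolution]
    rw [((hasDerivAt_abelKernel_convolution_Rline hφ0 hω σ).const_mul _).deriv]
    ring
  have hd : HasDerivAt (fun σ => F0 φ0 φ1 σ ω1 ω2) (1 / (2 * √2 * π) *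
      (-(abelKernel ⋆ fun s => Rline (dirDeriv ω1 ω2 (dirDeriv ω1 ω2 φ0)) s ω1 ω2) σ +
        (abelKernel ⋆ fun s => Rline (dirDeriv ω1 ω2 φ1) s ω1 ω2) σ)) σ :=
    hF0 ▸ ((hasDerivAt_abelKernel_convolution_Rline hdφ0 hω σ).neg.add
      (hasDerivAt_abelKernel_convolution_Rline hφ1 hω σ)).const_mul _
  rw [dF0, hd.deriv, abelKernel_convolution_sub
      (hasCompactSupport_Rline (f := dirDeriv ω1 ω2 φ1) (smoothCompact2_dirDeriv hφ1 ω1 ω2).2 hω)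
      (hasCompactSupport_Rline (f := dirDeriv ω1 ω2 (dirDeriv ω1 ω2 φ0))
        (smoothCompact2_dirDeriv hdφ0 ω1 ω2).2 hω)
      (continuous_Rline (smoothCompact2_dirDeriv hφ1 ω1 ω2) hω)
      (continuous_Rline (smoothCompact2_dirDeriv hdφ0 ω1 ω2) hω)]
  ring

theorem abs_dF0_le {φ0 φ1 : ℝ → ℝ → ℝ} (hφ0 : SmoothCompact2 φ0) (hφ1 : SmoothCompact2 φ1)
    {R B ω1 ω2 : ℝ} (hR : 1 ≤ R)
    (hR0 : ∀ p ∈ tsupport (Function.uncurry φ0), radius p.1 p.2 < R)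
    (hR1 : ∀ p ∈ tsupport (Function.uncurry φ1), radius p.1 p.2 < R)
    (hB0 : ∀ x y, |dirDeriv ω1 ω2 φ0 x y| ≤ B ∧ |dirDeriv ω1 ω2 (dirDeriv ω1 ω2 φ0) x y| ≤ B)
    (hB1 : ∀ x y, |φ1 x y| ≤ B ∧ |dirDeriv ω1 ω2 φ1 x y| ≤ B)
    (hω : ω1 ^ 2 + ω2 ^ 2 = 1) (σ : ℝ) :
    |dF0 φ0 φ1 σ ω1 ω2| ≤
      1 / (2 * √2 * π) * (18 * (4 * R * B) * R ^ 2) * jb σ ^ (-(3 : ℝ) / 2) := by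
  have hdφ0 := smoothCompact2_dirDeriv hφ0 ω1 ω2
  have hR0' : ∀ p ∈ tsupport (Function.uncurry (dirDeriv ω1 ω2 φ0)), radius p.1 p.2 < R :=
    fun p hp => hR0 p (tsupport_dirDeriv_subset ω1 ω2 φ0 hp)
  have hR0'' : ∀ p ∈ tsupport (Function.uncurry (dirDeriv ω1 ω2 (dirDeriv ω1 ω2 φ0))),
      radius p.1 p.2 < R := fun p hp => hR0' p (tsupport_dirDeriv_subset ω1 ω2 _ hp)
  have hR1' : ∀ p ∈ tsupport (Function.uncurry (dirDeriv ω1 ω2 φ1)), radius p.1 p.2 < R :=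
    fun p hp => hR1 p (tsupport_dirDeriv_subset ω1 ω2 φ1 hp)
  rw [dF0_eq_abelKernel_convolution hφ0 hφ1 hω, abs_mul, abs_of_pos (by positivity),
    mul_assoc (1 / (2 * √2 * π))]
  refine mul_le_mul_of_nonneg_left ?_ (by positivity : (0 : ℝ) ≤ 1 / (2 * √2 * π))
  refine abs_abelKernel_convolution_deriv_le hR
    (W := fun s => Rline φ1 s ω1 ω2 - Rline (dirDeriv ω1 ω2 φ0) s ω1 ω2)
    (fun s => (hasDerivAt_Rline (hφ1.1.of_le ENat.LEInfty.out) hφ1.2 hω s).sub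
      (hasDerivAt_Rline (f := dirDeriv ω1 ω2 φ0) (hdφ0.1.of_le ENat.LEInfty.out) hdφ0.2 hω s))
    ((continuous_Rline (smoothCompact2_dirDeriv hφ1 ω1 ω2) hω).sub
      (continuous_Rline (smoothCompact2_dirDeriv hdφ0 ω1 ω2) hω))
    (fun s hs => ?_) (fun s hs => ?_) (fun s => ?_) (fun s => ?_) σ
  · simp [Rline_eq_zero hR1 hω hs, Rline_eq_zero hR0' hω hs]
  · simp [Rline_eq_zero hR1' hω hs, Rline_eq_zero hR0'' hω hs]
  · linarith [abs_sub (Rline φ1 s ω1 ω2) (Rline (dirDeriv ω1 ω2 φ0) s ω1 ω2),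
      abs_Rline_le hR1 (by linarith) (fun x y => (hB1 x y).1) hω s,
      abs_Rline_le hR0' (by linarith) (fun x y => (hB0 x y).1) hω s]
  · linarith [abs_sub (Rline (dirDeriv ω1 ω2 φ1) s ω1 ω2)
        (Rline (dirDeriv ω1 ω2 (dirDeriv ω1 ω2 φ0)) s ω1 ω2),
      abs_Rline_le hR1' (by linarith) (fun x y => (hB1 x y).2) hω s,
      abs_Rline_le hR0'' (by linarith) (fun x y => (hB0 x y).2) hω s]

/-- decay of the `σ`-derivative of the radiation field. -/
theorem radiation_field_decay (φ0 φ1 : ℝ → ℝ → ℝ)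
    (hφ0 : SmoothCompact2 φ0) (hφ1 : SmoothCompact2 φ1) :
    ∃ C : ℝ, 0 < C ∧
      ∀ σ ω1 ω2 : ℝ, ω1 ^ 2 + ω2 ^ 2 = 1 →
        |dF0 φ0 φ1 σ ω1 ω2| ≤ C * jb σ ^ (-(3 : ℝ) / 2) := by
  obtain ⟨R0, hR0, hsupp0⟩ := exists_radius_of_hasCompactSupport hφ0.2
  obtain ⟨R1, -, hsupp1⟩ := exists_radius_of_hasCompactSupport hφ1.2
  obtain ⟨B0, hB0, hbound0⟩ := hφ0.exists_bound
  obtain ⟨B1, hB1, hbound1⟩ := hφ1.exists_bound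
  have hR : 0 < max R0 R1 := (zero_lt_one.trans_le hR0).trans_le (le_max_left _ _)
  refine ⟨1 / (2 * √2 * π) * (18 * (4 * max R0 R1 * (B0 + B1)) * max R0 R1 ^ 2),
    by positivity, fun σ ω1 ω2 hω => ?_⟩
  refine abs_dF0_le hφ0 hφ1 (hR0.trans (le_max_left _ _))
    (fun p hp => (hsupp0 p hp).trans_le (le_max_left _ _))
    (fun p hp => (hsupp1 p hp).trans_le (le_max_right _ _))
    (fun x y => ?_) (fun x y => ?_) hω σ
  · obtain ⟨-, h1, h2⟩ := hbound0 ω1 ω2 hω x y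
    exact ⟨by linarith, by linarith⟩
  · obtain ⟨h0, h1, -⟩ := hbound1 ω1 ω2 hω x y
    exact ⟨by linarith, by linarith⟩
end
end
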